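/- arXiv:2401.09191 — 5 statements merged into one kernel-verified Lean document; each statement's English description precedes it below -/
import Mathlib

section
/- Let 1 ≤ L ≤ K and suppose the family (λ*_A, μ*_{i,A})_{A∈S_K, i∈A} attains the infimum of the untruncated generalized barycenter problem V(K). Then the truncated value satisfies V(L) − V(K) ≤ Σ_{k=L+1}^{K} (k/L − 1) · Σ_{A∈S_K, |A|=k} λ*_A(ℝ^p). -/
/-!
If `V(K)` is finite, every cost `C_ε(λ*_A, μ*_{i,A})` of the optimal plan is finite, hence zero,
because `c_ε` only takes the values `0` and `∞`. Now replace each `λ*_A` with `|A| > L` by copies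
on the `L`-subsets `B ⊆ A`, each with weight `1 / C(|A| - 1, L - 1)`, and split `μ*_{i,A}` in the
same way for `i ∈ B`. Every `i ∈ A` lies in exactly `C(|A| - 1, L - 1)` such `B`, so the marginals
`μ_i` are preserved and the zero-cost couplings carry over, while the mass of `λ*_A` is multiplied
by `C(|A|, L) / C(|A| - 1, L - 1) = |A| / L`.
-/

open MeasureTheory
open scoped ENNReal BigOperators

noncomputable section

/-- The cost `c_ε(x, x') = 0` if `‖x − x'‖ ≤ ε` and `+∞` otherwise. -/
def ceps {E : Type*} [NormedAddCommGroup E] (ε : ℝ) (x y : E) : ℝ≥0∞ :=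
  if ‖x - y‖ ≤ ε then 0 else ⊤

/-- The optimal transport cost `C_ε(ρ, σ)` associated to the cost `c_ε`
(`+∞` if no coupling of `ρ` and `σ` exists). -/
def Ceps {E : Type*} [NormedAddCommGroup E] [MeasurableSpace E] (ε : ℝ)
    (ρ σ : Measure E) : ℝ≥0∞ :=
  sInf {v : ℝ≥0∞ | ∃ π : Measure (E × E),
    π.map Prod.fst = ρ ∧ π.map Prod.snd = σ ∧ v = ∫⁻ z, ceps ε z.1 z.2 ∂π}

/-- The collection of nonempty subsets of `{1, …, K}`. -/
def SK (K : ℕ) : Finset (Finset (Fin K)) := Finset.univ.filter fun A => A.Nonempty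

/-- The value `V(L)` of the level-`L` truncated generalized barycenter problem. -/
def Vval {E : Type*} [NormedAddCommGroup E] [MeasurableSpace E] (ε : ℝ) (K L : ℕ)
    (μ : Fin K → Measure E) : ℝ≥0∞ :=
  sInf {v : ℝ≥0∞ |
    ∃ (lam : Finset (Fin K) → Measure E) (m : Fin K → Finset (Fin K) → Measure E),
      (∀ A, IsFiniteMeasure (lam A)) ∧ (∀ i A, IsFiniteMeasure (m i A)) ∧
      (∀ A : Finset (Fin K), L < A.card → lam A = 0) ∧
      (∀ (i : Fin K) (A : Finset (Fin K)), L < A.card → m i A = 0) ∧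
      (∀ i : Fin K, ∑ A ∈ (SK K).filter (fun A => i ∈ A), m i A = μ i) ∧
      v = ∑ A ∈ SK K, (lam A Set.univ + ∑ i ∈ A, Ceps ε (lam A) (m i A))}

section Coupling

variable {E : Type*} [NormedAddCommGroup E] [MeasurableSpace E] (ε : ℝ)

def EpsCoupled (ρ σ : Measure E) : Prop :=
  ∃ π : Measure (E × E), π.map Prod.fst = ρ ∧ π.map Prod.snd = σ ∧
    ∫⁻ z, ceps ε z.1 z.2 ∂π = 0

-- `c_ε` takes only the values `0` and `∞`, so `2 * c_ε = c_ε`; no measurability of `c_ε` is needed.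
lemma lintegral_ceps_eq_zero_of_ne_top {π : Measure (E × E)}
    (h : ∫⁻ z, ceps ε z.1 z.2 ∂π ≠ ⊤) : ∫⁻ z, ceps ε z.1 z.2 ∂π = 0 := by
  have hdouble : 2 * ∫⁻ z, ceps ε z.1 z.2 ∂π = ∫⁻ z, ceps ε z.1 z.2 ∂π := by
    rw [← lintegral_const_mul' _ _ ENNReal.ofNat_ne_top]
    congr with z
    unfold ceps
    split_ifs <;> simp
  rw [two_mul] at hdouble
  exact (ENNReal.add_right_inj h).1 (hdouble.trans (add_zero _).symm)

variable {ε}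

lemma epsCoupled_of_Ceps_ne_top {ρ σ : Measure E} (h : Ceps ε ρ σ ≠ ⊤) : EpsCoupled ε ρ σ := by
  obtain ⟨v, ⟨π, hfst, hsnd, rfl⟩, hv⟩ := sInf_lt_iff.1 (lt_top_iff_ne_top.2 h)
  exact ⟨π, hfst, hsnd, lintegral_ceps_eq_zero_of_ne_top ε hv.ne⟩

lemma Ceps_eq_zero_of_epsCoupled {ρ σ : Measure E} (h : EpsCoupled ε ρ σ) : Ceps ε ρ σ = 0 := by
  obtain ⟨π, hfst, hsnd, hcost⟩ := h
  exact le_antisymm (sInf_le ⟨π, hfst, hsnd, hcost.symm⟩) bot_le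

lemma EpsCoupled.zero : EpsCoupled ε (0 : Measure E) 0 :=
  ⟨0, by simp, by simp, by simp⟩

lemma EpsCoupled.add {ρ σ ρ' σ' : Measure E} (h : EpsCoupled ε ρ σ) (h' : EpsCoupled ε ρ' σ') :
    EpsCoupled ε (ρ + ρ') (σ + σ') := by
  obtain ⟨π, hfst, hsnd, hcost⟩ := h
  obtain ⟨π', hfst', hsnd', hcost'⟩ := h'
  refine ⟨π + π', ?_, ?_, ?_⟩
  · rw [Measure.map_add _ _ measurable_fst, hfst, hfst']
  · rw [Measure.map_add _ _ measurable_snd, hsnd, hsnd']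
  · rw [lintegral_add_measure, hcost, hcost', add_zero]

lemma EpsCoupled.smul {ρ σ : Measure E} (h : EpsCoupled ε ρ σ) (c : ℝ≥0∞) :
    EpsCoupled ε (c • ρ) (c • σ) := by
  obtain ⟨π, hfst, hsnd, hcost⟩ := h
  exact ⟨c • π, by rw [Measure.map_smul, hfst], by rw [Measure.map_smul, hsnd],
    by rw [lintegral_smul_measure, hcost, smul_zero]⟩

lemma EpsCoupled.finset_sum {ι : Type*} {s : Finset ι} {ρ σ : ι → Measure E}
    (h : ∀ j ∈ s, EpsCoupled ε (ρ j) (σ j)) : EpsCoupled ε (∑ j ∈ s, ρ j) (∑ j ∈ s, σ j) := by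
  induction s using Finset.cons_induction with
  | empty => simpa using EpsCoupled.zero
  | cons a s ha ih =>
    rw [Finset.sum_cons, Finset.sum_cons]
    exact (h a (Finset.mem_cons_self a s)).add (ih fun j hj => h j (Finset.mem_cons_of_mem hj))

end Coupling

section Pieces

variable {α : Type*} (L : ℕ) (A : Finset α)

def pieces : Finset (Finset α) := if A.card ≤ L then {A} else A.powersetCard L

-- Each `i ∈ A` lies in `(#A - 1).choose (L - 1)` of the `L`-subsets of `A`.
def pieceWeight : ℝ≥0∞ := if A.card ≤ L then 1 else (((A.card - 1).choose (L - 1) : ℕ) : ℝ≥0∞)⁻¹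

variable {L A}

lemma subset_of_mem_pieces {B : Finset α} (hB : B ∈ pieces L A) : B ⊆ A := by
  unfold pieces at hB
  split_ifs at hB
  · exact (Finset.mem_singleton.1 hB).le
  · exact (Finset.mem_powersetCard.1 hB).1

lemma card_le_of_mem_pieces {B : Finset α} (hB : B ∈ pieces L A) : B.card ≤ L := by
  unfold pieces at hB
  split_ifs at hB with hA
  · rwa [Finset.mem_singleton.1 hB]
  · exact (Finset.mem_powersetCard.1 hB).2.le

lemma nonempty_of_mem_pieces (hL : 1 ≤ L) (hA : A.Nonempty) {B : Finset α}
    (hB : B ∈ pieces L A) : B.Nonempty := by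
  unfold pieces at hB
  split_ifs at hB
  · rwa [Finset.mem_singleton.1 hB]
  · rw [← Finset.card_pos, (Finset.mem_powersetCard.1 hB).2]
    exact hL

lemma choose_pred_pos_of_lt (hA : L < A.card) : 0 < (A.card - 1).choose (L - 1) :=
  Nat.choose_pos (by omega)

lemma pieceWeight_ne_top : pieceWeight L A ≠ ⊤ := by
  unfold pieceWeight
  split_ifs with hA
  · exact ENNReal.one_ne_top
  · exact ENNReal.inv_ne_top.2 (Nat.cast_ne_zero.2 (choose_pred_pos_of_lt (not_le.1 hA)).ne')

lemma card_filter_mem_pieces_mul_pieceWeight [DecidableEq α] (hL : 1 ≤ L) {i : α} (hi : i ∈ A) :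
    (((pieces L A).filter (i ∈ ·)).card : ℝ≥0∞) * pieceWeight L A = 1 := by
  unfold pieces pieceWeight
  split_ifs with hA
  · rw [Finset.filter_singleton, if_pos hi]
    simp
  · have hcount : ((A.powersetCard L).filter (i ∈ ·)).card = (A.card - 1).choose (L - 1) := by
      simpa [Finset.singleton_subset_iff] using
        Finset.card_filter_powersetCard_subset {i} A L (Finset.singleton_subset_iff.2 hi)
          (by simpa using hL)
    rw [hcount]
    exact ENNReal.mul_inv_cancel
      (Nat.cast_ne_zero.2 (choose_pred_pos_of_lt (not_le.1 hA)).ne') (ENNReal.natCast_ne_top _)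

lemma card_pieces_mul_pieceWeight (hL : 1 ≤ L) :
    ((pieces L A).card : ℝ≥0∞) * pieceWeight L A = 1 + ((A.card : ℝ≥0∞) / L - 1) := by
  unfold pieces pieceWeight
  split_ifs with hA
  · rw [Finset.card_singleton, Nat.cast_one, one_mul, tsub_eq_zero_of_le, add_zero]
    exact ENNReal.div_le_of_le_mul (by rw [one_mul]; exact_mod_cast hA)
  · push Not at hA
    have hchoose : L * A.card.choose L = (A.card - 1).choose (L - 1) * A.card := by
      have h := Nat.add_one_mul_choose_eq (A.card - 1) (L - 1)
      rw [Nat.sub_add_cancel (by omega), Nat.sub_add_cancel hL] at h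
      rw [mul_comm, ← h, mul_comm]
    have hL0 : (L : ℝ≥0∞) ≠ 0 := Nat.cast_ne_zero.2 (by omega)
    have hone : 1 ≤ (A.card : ℝ≥0∞) / L :=
      (ENNReal.le_div_iff_mul_le (Or.inl hL0) (Or.inl (ENNReal.natCast_ne_top L))).2
        (by rw [one_mul]; exact_mod_cast hA.le)
    rw [add_tsub_cancel_of_le hone, Finset.card_powersetCard, ← div_eq_mul_inv,
      ENNReal.div_eq_div_iff hL0 (ENNReal.natCast_ne_top L)
        (Nat.cast_ne_zero.2 (choose_pred_pos_of_lt hA).ne') (ENNReal.natCast_ne_top _)]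
    exact_mod_cast hchoose

end Pieces

section SplitPlan

variable {E : Type*} [MeasurableSpace E] {K : ℕ} (L : ℕ)

def splitPlan (ν : Finset (Fin K) → Measure E) (B : Finset (Fin K)) : Measure E :=
  ∑ A ∈ (SK K).filter (B ∈ pieces L ·), pieceWeight L A • ν A

variable {L}

lemma splitPlan_eq_zero_of_lt_card (ν : Finset (Fin K) → Measure E) {B : Finset (Fin K)}
    (hB : L < B.card) : splitPlan L ν B = 0 := by
  refine Finset.sum_eq_zero fun A hA => ?_
  exact absurd (card_le_of_mem_pieces (Finset.mem_filter.1 hA).2) (not_le.2 hB)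

lemma isFiniteMeasure_splitPlan {ν : Finset (Fin K) → Measure E}
    (hν : ∀ A, IsFiniteMeasure (ν A)) (B : Finset (Fin K)) : IsFiniteMeasure (splitPlan L ν B) := by
  refine ⟨?_⟩
  rw [splitPlan, Measure.finsetSum_apply]
  exact ENNReal.sum_lt_top.2 fun A _ =>
    ENNReal.mul_lt_top pieceWeight_ne_top.lt_top (measure_lt_top _ _)

lemma sum_splitPlan (ν : Finset (Fin K) → Measure E) (T : Finset (Finset (Fin K))) :
    ∑ B ∈ T, splitPlan L ν B =
      ∑ A ∈ SK K, (((pieces L A).filter (· ∈ T)).card * pieceWeight L A) • ν A := by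
  unfold splitPlan
  rw [Finset.sum_comm' (t' := SK K) (s' := fun A => (pieces L A).filter (· ∈ T))
    (fun B A => by simp only [Finset.mem_filter]; tauto)]
  refine Finset.sum_congr rfl fun A _ => ?_
  rw [Finset.sum_const, ← Nat.cast_smul_eq_nsmul ℝ≥0∞, smul_smul]

end SplitPlan

lemma sum_cost_eq_sum_mass_of_epsCoupled {E : Type*} [NormedAddCommGroup E] [MeasurableSpace E]
    {ε : ℝ} {K : ℕ} {lam : Finset (Fin K) → Measure E} {m : Fin K → Finset (Fin K) → Measure E}
    (hcoupled : ∀ A ∈ SK K, ∀ i ∈ A, EpsCoupled ε (lam A) (m i A)) :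
    ∑ A ∈ SK K, (lam A Set.univ + ∑ i ∈ A, Ceps ε (lam A) (m i A)) =
      ∑ A ∈ SK K, lam A Set.univ := by
  refine Finset.sum_congr rfl fun A hA => ?_
  rw [Finset.sum_eq_zero fun i hi => Ceps_eq_zero_of_epsCoupled (hcoupled A hA i hi), add_zero]

lemma epsCoupled_of_sum_cost_ne_top {E : Type*} [NormedAddCommGroup E] [MeasurableSpace E]
    {ε : ℝ} {K : ℕ} {lam : Finset (Fin K) → Measure E} {m : Fin K → Finset (Fin K) → Measure E}
    (h : ∑ A ∈ SK K, (lam A Set.univ + ∑ i ∈ A, Ceps ε (lam A) (m i A)) ≠ ⊤) :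
    ∀ A ∈ SK K, ∀ i ∈ A, EpsCoupled ε (lam A) (m i A) := by
  intro A hA i hi
  refine epsCoupled_of_Ceps_ne_top (ne_top_of_le_ne_top h ?_)
  calc Ceps ε (lam A) (m i A) ≤ ∑ j ∈ A, Ceps ε (lam A) (m j A) :=
        Finset.single_le_sum (f := fun j => Ceps ε (lam A) (m j A)) (fun _ _ => bot_le) hi
    _ ≤ lam A Set.univ + ∑ j ∈ A, Ceps ε (lam A) (m j A) := le_add_self
    _ ≤ _ := Finset.single_le_sum (f := fun A => lam A Set.univ +
        ∑ j ∈ A, Ceps ε (lam A) (m j A)) (fun _ _ => bot_le) hA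

lemma Vval_le_sum_of_epsCoupled {E : Type*} [NormedAddCommGroup E] [MeasurableSpace E]
    {ε : ℝ} {K L : ℕ} {μ : Fin K → Measure E}
    (lam : Finset (Fin K) → Measure E) (m : Fin K → Finset (Fin K) → Measure E)
    (hlam : ∀ A, IsFiniteMeasure (lam A)) (hm : ∀ i A, IsFiniteMeasure (m i A))
    (hlam_trunc : ∀ A : Finset (Fin K), L < A.card → lam A = 0)
    (hm_trunc : ∀ (i : Fin K) (A : Finset (Fin K)), L < A.card → m i A = 0)
    (hfeas : ∀ i : Fin K, ∑ A ∈ (SK K).filter (fun A => i ∈ A), m i A = μ i)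
    (hcoupled : ∀ A ∈ SK K, ∀ i ∈ A, EpsCoupled ε (lam A) (m i A)) :
    Vval ε K L μ ≤ ∑ A ∈ SK K, lam A Set.univ := by
  refine (sInf_le ?_).trans_eq (sum_cost_eq_sum_mass_of_epsCoupled hcoupled)
  exact ⟨lam, m, hlam, hm, hlam_trunc, hm_trunc, hfeas, rfl⟩

lemma Vval_le_sum_splitPlan {E : Type*} [NormedAddCommGroup E] [MeasurableSpace E]
    {ε : ℝ} {K L : ℕ} (hL : 1 ≤ L) {μ : Fin K → Measure E}
    {lam : Finset (Fin K) → Measure E} {m : Fin K → Finset (Fin K) → Measure E}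
    (hlam : ∀ A, IsFiniteMeasure (lam A)) (hm : ∀ i A, IsFiniteMeasure (m i A))
    (hfeas : ∀ i : Fin K, ∑ A ∈ (SK K).filter (fun A => i ∈ A), m i A = μ i)
    (hcoupled : ∀ A ∈ SK K, ∀ i ∈ A, EpsCoupled ε (lam A) (m i A)) :
    Vval ε K L μ ≤ ∑ A ∈ SK K, (1 + ((A.card : ℝ≥0∞) / L - 1)) * lam A Set.univ := by
  have hpieces : ∀ A ∈ SK K, ∀ B ∈ pieces L A, B ∈ SK K := fun A hA B hB =>
    Finset.mem_filter.2 ⟨Finset.mem_univ B,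
      nonempty_of_mem_pieces hL (Finset.mem_filter.1 hA).2 hB⟩
  have hcover : ∀ i, ∀ A ∈ SK K,
      (((pieces L A).filter (· ∈ (SK K).filter (i ∈ ·))).card : ℝ≥0∞) * pieceWeight L A =
        if i ∈ A then 1 else 0 := by
    intro i A hA
    split_ifs with hi
    · rw [← card_filter_mem_pieces_mul_pieceWeight hL hi]
      congr 3
      exact Finset.filter_congr fun B hB => by simp [hpieces A hA B hB]
    · have hnone : (pieces L A).filter (· ∈ (SK K).filter (i ∈ ·)) = ∅ :=
        Finset.filter_eq_empty_iff.2 fun B hB hBi =>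
          hi (subset_of_mem_pieces hB (Finset.mem_filter.1 hBi).2)
      rw [hnone, Finset.card_empty, Nat.cast_zero, zero_mul]
  refine (Vval_le_sum_of_epsCoupled (splitPlan L lam) (fun i => splitPlan L (m i))
    (isFiniteMeasure_splitPlan hlam) (fun i => isFiniteMeasure_splitPlan (hm i))
    (fun _ => splitPlan_eq_zero_of_lt_card lam) (fun i _ => splitPlan_eq_zero_of_lt_card (m i))
    ?feas ?coupled).trans_eq ?mass
  case feas =>
    intro i
    rw [sum_splitPlan, ← hfeas i, Finset.sum_filter]
    exact Finset.sum_congr rfl fun A hA => by rw [hcover i A hA, ite_smul, one_smul, zero_smul]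
  case coupled =>
    intro B _ i hi
    exact EpsCoupled.finset_sum fun A hA => (hcoupled A (Finset.mem_filter.1 hA).1 i
      (subset_of_mem_pieces (Finset.mem_filter.1 hA).2 hi)).smul _
  case mass =>
    rw [← Measure.finsetSum_apply, sum_splitPlan, Measure.finsetSum_apply]
    refine Finset.sum_congr rfl fun A hA => ?_
    rw [Finset.filter_true_of_mem (hpieces A hA), card_pieces_mul_pieceWeight hL,
      Measure.smul_apply, smul_eq_mul]

lemma sum_card_div_sub_one_mul_eq {K : ℕ} (L : ℕ) (x : Finset (Fin K) → ℝ≥0∞) :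
    ∑ A ∈ SK K, ((A.card : ℝ≥0∞) / L - 1) * x A =
      ∑ k ∈ Finset.Icc (L + 1) K,
        ((k : ℝ≥0∞) / L - 1) * ∑ A ∈ (SK K).filter (fun A => A.card = k), x A := by
  have hsmall : ∀ A : Finset (Fin K), A.card ≤ L → (A.card : ℝ≥0∞) / L - 1 = 0 := fun A hA =>
    tsub_eq_zero_of_le (ENNReal.div_le_of_le_mul (by rw [one_mul]; exact_mod_cast hA))
  simp_rw [Finset.mul_sum]
  rw [← Finset.sum_filter_of_ne (p := fun A => A.card ∈ Finset.Icc (L + 1) K),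
    ← Finset.sum_fiberwise_eq_sum_filter]
  · exact Finset.sum_congr rfl fun k _ => Finset.sum_congr rfl fun A hA => by
      rw [(Finset.mem_filter.1 hA).2]
  · intro A _ hA
    have hcard : A.card ≤ K := by simpa using Finset.card_le_univ A
    by_contra hIcc
    exact hA (by rw [hsmall A (by rw [Finset.mem_Icc] at hIcc; omega), zero_mul])

theorem stmt0_general {E : Type*} [NormedAddCommGroup E] [MeasurableSpace E]
    (ε : ℝ) (K L : ℕ) (hL : 1 ≤ L)
    (μ : Fin K → Measure E)
    (lamS : Finset (Fin K) → Measure E) (mS : Fin K → Finset (Fin K) → Measure E)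
    (hlamfin : ∀ A, IsFiniteMeasure (lamS A))
    (hmfin : ∀ i A, IsFiniteMeasure (mS i A))
    (hfeas : ∀ i : Fin K, ∑ A ∈ (SK K).filter (fun A => i ∈ A), mS i A = μ i)
    (hopt : ∑ A ∈ SK K, (lamS A Set.univ + ∑ i ∈ A, Ceps ε (lamS A) (mS i A))
      = Vval ε K K μ) :
    Vval ε K L μ - Vval ε K K μ ≤
      ∑ k ∈ Finset.Icc (L + 1) K,
        ((k : ℝ≥0∞) / (L : ℝ≥0∞) - 1) *
          ∑ A ∈ (SK K).filter (fun A => A.card = k), lamS A Set.univ := by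
  rcases eq_or_ne (Vval ε K K μ) ⊤ with htop | htop
  · simp [htop]
  have hcoupled : ∀ A ∈ SK K, ∀ i ∈ A, EpsCoupled ε (lamS A) (mS i A) :=
    epsCoupled_of_sum_cost_ne_top (hopt ▸ htop)
  have hVK : Vval ε K K μ = ∑ A ∈ SK K, lamS A Set.univ :=
    hopt.symm.trans (sum_cost_eq_sum_mass_of_epsCoupled hcoupled)
  have hfin : ∑ A ∈ SK K, lamS A Set.univ ≠ ⊤ := hVK ▸ htop
  calc Vval ε K L μ - Vval ε K K μ
      ≤ ∑ A ∈ SK K, (1 + ((A.card : ℝ≥0∞) / L - 1)) * lamS A Set.univ -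
          ∑ A ∈ SK K, lamS A Set.univ := by
        rw [hVK]
        exact tsub_le_tsub_right (Vval_le_sum_splitPlan hL hlamfin hmfin hfeas hcoupled) _
    _ = ∑ A ∈ SK K, ((A.card : ℝ≥0∞) / L - 1) * lamS A Set.univ := by
        simp_rw [add_mul, one_mul]
        rw [Finset.sum_add_distrib, ENNReal.add_sub_cancel_left hfin]
    _ = _ := sum_card_div_sub_one_mul_eq L _

/-- if `(λ*_A, μ*_{i,A})` attains the untruncated generalized barycenter
value `V(K)`, then for `1 ≤ L ≤ K`,
`V(L) − V(K) ≤ Σ_{k=L+1}^K (k/L − 1) Σ_{|A|=k} λ*_A(ℝ^p)`. -/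
theorem stmt0 {E : Type*} [NormedAddCommGroup E] [NormedSpace ℝ E]
    [FiniteDimensional ℝ E] [MeasurableSpace E] [BorelSpace E]
    (ε : ℝ) (hε : 0 < ε) (K L : ℕ) (hL : 1 ≤ L) (hLK : L ≤ K)
    (μ : Fin K → Measure E) (hμ : ∀ i, IsFiniteMeasure (μ i))
    (lamS : Finset (Fin K) → Measure E) (mS : Fin K → Finset (Fin K) → Measure E)
    (hlamfin : ∀ A, IsFiniteMeasure (lamS A))
    (hmfin : ∀ i A, IsFiniteMeasure (mS i A))
    (hfeas : ∀ i : Fin K, ∑ A ∈ (SK K).filter (fun A => i ∈ A), mS i A = μ i)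
    (hopt : ∑ A ∈ SK K, (lamS A Set.univ + ∑ i ∈ A, Ceps ε (lamS A) (mS i A))
      = Vval ε K K μ) :
    Vval ε K L μ - Vval ε K K μ ≤
      ∑ k ∈ Finset.Icc (L + 1) K,
        ((k : ℝ≥0∞) / (L : ℝ≥0∞) - 1) *
          ∑ A ∈ (SK K).filter (fun A => A.card = k), lamS A Set.univ :=
  stmt0_general ε K L hL μ lamS mS hlamfin hmfin hfeas hopt

end
end

section
/- Let 1 ≤ L ≤ K and suppose the family (π*_A)_{A∈S_K} attains the infimum of the untruncated stratified multimarginal optimal transport problem M(K). Then the truncated value satisfies M(L) − M(K) ≤ Σ_{k=L+1}^{K} (k/L) · Σ_{A∈S_K, |A|=k} π*_A((ℝ^p)^A). -/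
open MeasureTheory
open scoped ENNReal BigOperators

noncomputable section

/-- The cost tensor `c_{ε,A}(x_A) = inf_{x'} Σ_{i∈A} c_ε(x', x_i)`. -/
def cepsA {E : Type*} [NormedAddCommGroup E] (ε : ℝ) {K : ℕ}
    (A : Finset (Fin K)) (x : (j : A) → E) : ℝ≥0∞ :=
  ⨅ x' : E, ∑ i : A, ceps ε x' (x i)

/-- Pushforward of a measure on `E^A` by the projection onto coordinate `i ∈ A`
(the zero measure when `i ∉ A`). -/
def projMarg {E : Type*} [MeasurableSpace E] {K : ℕ} (A : Finset (Fin K))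
    (π : Measure ((j : A) → E)) (i : Fin K) : Measure E :=
  if hi : i ∈ A then π.map (fun x => x ⟨i, hi⟩) else 0

/-- The value `M(L)` of the level-`L` truncated stratified MOT problem. -/
def Mval {E : Type*} [NormedAddCommGroup E] [MeasurableSpace E] (ε : ℝ) (K L : ℕ)
    (μ : Fin K → Measure E) : ℝ≥0∞ :=
  sInf {v : ℝ≥0∞ |
    ∃ π : (A : Finset (Fin K)) → Measure ((j : A) → E),
      (∀ i : Fin K,
        ∑ A ∈ (SK K).filter (fun A => A.card ≤ L ∧ i ∈ A), projMarg A (π A) i = μ i) ∧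
      v = ∑ A ∈ (SK K).filter (fun A => A.card ≤ L),
            ∫⁻ x, (1 + cepsA ε A x) ∂(π A)}

/-!
If `M(K) = ∞` there is nothing to prove. Otherwise every `π*_A` has finite cost, and since
`c_{ε,A}` only takes the values `0` and `∞`, its cost is just its mass. A level-`L` plan is
obtained by keeping `π*_B` for `|B| ≤ L` and spreading each `π*_A` with `|A| > L` over its
`L`-element faces: `B ⊆ A` receives the marginal of `π*_A` on `B` with weight
`1 / C(|A|-1, L-1)`, the reciprocal of the number of such faces containing a given `i ∈ A`,
so all marginal constraints survive. Restricting to fewer coordinates can only lower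
`c_ε`, and the `C(|A|, L)` faces carry total mass `C(|A|, L) / C(|A|-1, L-1) = |A| / L`
times that of `π*_A`.
-/

theorem lintegral_eq_zero_of_forall_eq_zero_or_top {α : Type*} [MeasurableSpace α]
    {ν : Measure α} {f : α → ℝ≥0∞} (hf : ∀ x, f x = 0 ∨ f x = ⊤) (h : ∫⁻ x, f x ∂ν ≠ ⊤) :
    ∫⁻ x, f x ∂ν = 0 := by
  have htwice : ∫⁻ x, f x ∂ν + 0 = ∫⁻ x, f x ∂ν + ∫⁻ x, f x ∂ν := by
    rw [add_zero, ← two_mul, ← lintegral_const_mul' 2 f (by norm_num)]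
    exact lintegral_congr fun x => by rcases hf x with hx | hx <;> simp [hx]
  exact ((ENNReal.add_right_inj h).mp htwice).symm

section StratifiedPlans

variable {E : Type*} {K : ℕ}

section FaceCounting

def faceWeight (L : ℕ) (A : Finset (Fin K)) : ℝ≥0∞ :=
  ((A.card - 1).choose (L - 1) : ℝ≥0∞)⁻¹

theorem faceWeight_mul_choose_pred {L : ℕ} {A : Finset (Fin K)} (hL : 1 ≤ L)
    (hLA : L ≤ A.card) : faceWeight L A * (A.card - 1).choose (L - 1) = 1 :=
  ENNReal.inv_mul_cancel (by exact_mod_cast (Nat.choose_pos (by omega)).ne')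
    (ENNReal.natCast_ne_top _)

theorem faceWeight_mul_choose {L : ℕ} {A : Finset (Fin K)} (hL : 1 ≤ L) (hLA : L ≤ A.card) :
    faceWeight L A * A.card.choose L = A.card / L := by
  obtain ⟨n, hn⟩ : ∃ n, A.card = n + 1 := ⟨A.card - 1, by omega⟩
  obtain ⟨l, rfl⟩ : ∃ l, L = l + 1 := ⟨L - 1, by omega⟩
  have hpos : n.choose l ≠ 0 := (Nat.choose_pos (by omega)).ne'
  rw [faceWeight, hn, Nat.add_sub_cancel, Nat.add_sub_cancel, ← ENNReal.div_eq_inv_mul,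
    ENNReal.div_eq_div_iff (by exact_mod_cast Nat.succ_ne_zero l) (ENNReal.natCast_ne_top _)
      (by exact_mod_cast hpos) (ENNReal.natCast_ne_top _)]
  exact_mod_cast by rw [mul_comm, ← Nat.add_one_mul_choose_eq, mul_comm]

theorem sum_filter_card_le_ite_card_eq {M : Type*} [AddCommMonoid M] {L : ℕ} (hL : 1 ≤ L)
    (f : Finset (Fin K) → M) :
    ∑ B ∈ (SK K).filter (fun B => B.card ≤ L), (if B.card = L then f B else 0) =
      ∑ B ∈ Finset.univ.powersetCard L, f B := by
  rw [← Finset.sum_filter]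
  refine Finset.sum_congr ?_ fun _ _ => rfl
  ext B
  simp only [SK, Finset.mem_filter, Finset.mem_univ, true_and, Finset.mem_powersetCard,
    Finset.subset_univ]
  exact ⟨fun h => h.2, fun h => ⟨⟨Finset.card_pos.mp (by omega), h.le⟩, h⟩⟩

theorem sum_card_div_mul_eq_sum_Icc (L : ℕ) (f : Finset (Fin K) → ℝ≥0∞) :
    ∑ A ∈ (SK K).filter (fun A => L < A.card), (A.card / L : ℝ≥0∞) * f A =
      ∑ k ∈ Finset.Icc (L + 1) K, (k / L : ℝ≥0∞) *
        ∑ A ∈ (SK K).filter (fun A => A.card = k), f A := by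
  have hmaps : ∀ A ∈ (SK K).filter (fun A => L < A.card), A.card ∈ Finset.Icc (L + 1) K :=
    fun A hA => Finset.mem_Icc.mpr
      ⟨(Finset.mem_filter.mp hA).2, (Finset.card_le_univ A).trans_eq (Fintype.card_fin K)⟩
  rw [← Finset.sum_fiberwise_of_maps_to hmaps]
  refine Finset.sum_congr rfl fun k hk => ?_
  have hLk := (Finset.mem_Icc.mp hk).1
  rw [Finset.filter_filter, Finset.mul_sum]
  refine Finset.sum_congr (Finset.filter_congr fun A _ => ?_) fun A hA => ?_
  · exact ⟨fun h => h.2, fun h => ⟨by omega, h⟩⟩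
  · rw [(Finset.mem_filter.mp hA).2]

end FaceCounting

section Marginals

variable [MeasurableSpace E]

def projMargₗ (A : Finset (Fin K)) (i : Fin K) :
    Measure ((j : A) → E) →ₗ[ℝ≥0∞] Measure E :=
  if hi : i ∈ A then Measure.mapₗ fun x => x ⟨i, hi⟩ else 0

theorem projMargₗ_apply (A : Finset (Fin K)) (i : Fin K) (ν : Measure ((j : A) → E)) :
    projMargₗ A i ν = projMarg A ν i := by
  unfold projMargₗ projMarg
  split_ifs
  · exact Measure.mapₗ_apply_of_measurable (measurable_pi_apply _) ν
  · rfl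

theorem projMarg_zero (A : Finset (Fin K)) (i : Fin K) :
    projMarg A (0 : Measure ((j : A) → E)) i = 0 := by
  rw [← projMargₗ_apply, map_zero]

theorem projMarg_of_notMem {A : Finset (Fin K)} {i : Fin K} (hi : i ∉ A)
    (ν : Measure ((j : A) → E)) : projMarg A ν i = 0 :=
  dif_neg hi

def restrictMeasure (A B : Finset (Fin K)) (ν : Measure ((j : A) → E)) :
    Measure ((j : B) → E) :=
  if h : B ⊆ A then ν.map (Finset.restrict₂ (π := fun _ => E) h) else 0

theorem restrictMeasure_of_not_subset {A B : Finset (Fin K)} (h : ¬B ⊆ A)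
    (ν : Measure ((j : A) → E)) : restrictMeasure A B ν = 0 :=
  dif_neg h

theorem sum_powersetCard_univ_restrictMeasure {M : Type*} [AddCommMonoid M]
    (f : (B : Finset (Fin K)) → Measure ((j : B) → E) → M) (hf : ∀ B, f B 0 = 0)
    (L : ℕ) (A : Finset (Fin K)) (ν : Measure ((j : A) → E)) :
    ∑ B ∈ Finset.univ.powersetCard L, f B (restrictMeasure A B ν) =
      ∑ B ∈ A.powersetCard L, f B (restrictMeasure A B ν) := by
  refine (Finset.sum_subset (Finset.powersetCard_mono (Finset.subset_univ A)) ?_).symm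
  intro B hB hBA
  have hsub : ¬B ⊆ A := fun h =>
    hBA (Finset.mem_powersetCard.mpr ⟨h, (Finset.mem_powersetCard.mp hB).2⟩)
  rw [restrictMeasure_of_not_subset hsub, hf]

theorem projMarg_restrictMeasure {A B : Finset (Fin K)} (h : B ⊆ A)
    (ν : Measure ((j : A) → E)) (i : Fin K) :
    projMarg B (restrictMeasure A B ν) i = if i ∈ B then projMarg A ν i else 0 := by
  by_cases hi : i ∈ B
  · rw [if_pos hi, projMarg, dif_pos hi, projMarg, dif_pos (h hi), restrictMeasure, dif_pos h,
      Measure.map_map (measurable_pi_apply _) (Finset.measurable_restrict₂ (X := fun _ => E) h)]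
    rfl
  · rw [if_neg hi, projMarg_of_notMem hi]

/-- Each `i ∈ A` lies in `C(|A|-1, L-1)` of the `L`-element faces of `A`. -/
theorem sum_projMarg_restrictMeasure {L : ℕ} (hL : 1 ≤ L) (A : Finset (Fin K))
    (ν : Measure ((j : A) → E)) (i : Fin K) :
    ∑ B ∈ Finset.univ.powersetCard L, projMarg B (restrictMeasure A B ν) i =
      (A.card - 1).choose (L - 1) • projMarg A ν i := by
  by_cases hi : i ∈ A
  swap
  · refine (Finset.sum_eq_zero fun B _ => ?_).trans (by rw [projMarg_of_notMem hi, smul_zero])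
    by_cases h : B ⊆ A
    · rw [projMarg_restrictMeasure h, if_neg fun hiB => hi (h hiB)]
    · rw [restrictMeasure_of_not_subset h, projMarg_zero]
  have hcount : ((A.powersetCard L).filter (i ∈ ·)).card = (A.card - 1).choose (L - 1) := by
    simpa only [Finset.singleton_subset_iff, Finset.card_singleton] using
      Finset.card_filter_powersetCard_subset {i} A L (Finset.singleton_subset_iff.mpr hi)
        (by simpa using hL)
  rw [sum_powersetCard_univ_restrictMeasure (fun B ν => projMarg B ν i)
      (fun B => projMarg_zero B i), ← hcount, ← Finset.sum_const, Finset.sum_filter]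
  exact Finset.sum_congr rfl fun B hB =>
    projMarg_restrictMeasure (Finset.mem_powersetCard.mp hB).1 ν i

end Marginals

section Costs

variable [NormedAddCommGroup E]

theorem ceps_eq_zero_or_top (ε : ℝ) (x y : E) : ceps ε x y = 0 ∨ ceps ε x y = ⊤ := by
  unfold ceps
  split_ifs <;> simp

theorem cepsA_eq_zero_or_top (ε : ℝ) (A : Finset (Fin K)) (x : (j : A) → E) :
    cepsA ε A x = 0 ∨ cepsA ε A x = ⊤ := by
  have hsum : ∀ x' : E, ∑ i : A, ceps ε x' (x i) = 0 ∨ ∑ i : A, ceps ε x' (x i) = ⊤ :=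
    fun x' => Finset.sum_induction _ (fun a => a = 0 ∨ a = ⊤)
      (by rintro a b (rfl | rfl) (rfl | rfl) <;> simp) (Or.inl rfl)
      fun i _ => ceps_eq_zero_or_top ε x' (x i)
  by_cases h0 : ∃ x' : E, ∑ i : A, ceps ε x' (x i) = 0
  · obtain ⟨x', hx'⟩ := h0
    exact Or.inl (le_antisymm ((iInf_le _ x').trans hx'.le) bot_le)
  · rw [not_exists] at h0
    exact Or.inr (iInf_eq_top.mpr fun x' => (hsum x').resolve_left (h0 x'))

theorem cepsA_restrict₂_le (ε : ℝ) {A B : Finset (Fin K)} (h : B ⊆ A) (x : (j : A) → E) :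
    cepsA ε B (Finset.restrict₂ (π := fun _ => E) h x) ≤ cepsA ε A x := by
  refine iInf_mono fun x' => ?_
  calc ∑ i : B, ceps ε x' (Finset.restrict₂ (π := fun _ => E) h x i)
      = ∑ j ∈ Finset.univ.map (Subtype.impEmbedding _ _ h), ceps ε x' (x j) := by
        rw [Finset.sum_map]; rfl
    _ ≤ ∑ j : A, ceps ε x' (x j) := Finset.sum_le_sum_of_subset (Finset.subset_univ _)

variable [MeasurableSpace E]

theorem lintegral_one_add_cepsA (ε : ℝ) {A : Finset (Fin K)} {ν : Measure ((j : A) → E)}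
    (h : ∫⁻ x, (1 + cepsA ε A x) ∂ν ≠ ⊤) : ∫⁻ x, (1 + cepsA ε A x) ∂ν = ν Set.univ := by
  rw [lintegral_add_left measurable_const] at h ⊢
  rw [lintegral_eq_zero_of_forall_eq_zero_or_top (cepsA_eq_zero_or_top ε A)
    (ENNReal.add_ne_top.mp h).2]
  simp

theorem lintegral_restrictMeasure_le (ε : ℝ) {A B : Finset (Fin K)} (h : B ⊆ A)
    (ν : Measure ((j : A) → E)) :
    ∫⁻ x, (1 + cepsA ε B x) ∂(restrictMeasure A B ν) ≤ ∫⁻ x, (1 + cepsA ε A x) ∂ν := by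
  rw [restrictMeasure, dif_pos h]
  exact (lintegral_map_le _ _).trans
    (lintegral_mono fun x => add_le_add_right (cepsA_restrict₂_le ε h x) 1)

theorem sum_lintegral_restrictMeasure_le (ε : ℝ) (L : ℕ) (A : Finset (Fin K))
    (ν : Measure ((j : A) → E)) :
    ∑ B ∈ Finset.univ.powersetCard L, ∫⁻ x, (1 + cepsA ε B x) ∂(restrictMeasure A B ν) ≤
      A.card.choose L * ∫⁻ x, (1 + cepsA ε A x) ∂ν := by
  rw [sum_powersetCard_univ_restrictMeasure (fun B ν => ∫⁻ x, (1 + cepsA ε B x) ∂ν)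
    (fun B => lintegral_zero_measure _)]
  calc ∑ B ∈ A.powersetCard L, ∫⁻ x, (1 + cepsA ε B x) ∂(restrictMeasure A B ν)
      ≤ ∑ B ∈ A.powersetCard L, ∫⁻ x, (1 + cepsA ε A x) ∂ν :=
        Finset.sum_le_sum fun B hB =>
          lintegral_restrictMeasure_le ε (Finset.mem_powersetCard.mp hB).1 ν
    _ = A.card.choose L * ∫⁻ x, (1 + cepsA ε A x) ∂ν := by
        rw [Finset.sum_const, Finset.card_powersetCard, nsmul_eq_mul]

end Costs

section Plans

variable [MeasurableSpace E]

def planMarginal (L : ℕ) (π : (A : Finset (Fin K)) → Measure ((j : A) → E)) (i : Fin K) :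
    Measure E :=
  ∑ A ∈ (SK K).filter (fun A => A.card ≤ L ∧ i ∈ A), projMarg A (π A) i

def planCost [NormedAddCommGroup E] (ε : ℝ) (L : ℕ)
    (π : (A : Finset (Fin K)) → Measure ((j : A) → E)) : ℝ≥0∞ :=
  ∑ A ∈ (SK K).filter (fun A => A.card ≤ L), ∫⁻ x, (1 + cepsA ε A x) ∂(π A)

theorem Mval_le_planCost [NormedAddCommGroup E] {ε : ℝ} {L : ℕ} {μ : Fin K → Measure E}
    {π : (A : Finset (Fin K)) → Measure ((j : A) → E)} (h : ∀ i, planMarginal L π i = μ i) :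
    Mval ε K L μ ≤ planCost ε L π :=
  sInf_le ⟨π, h, rfl⟩

theorem planCost_mono [NormedAddCommGroup E] (ε : ℝ) {L L' : ℕ} (h : L ≤ L')
    (π : (A : Finset (Fin K)) → Measure ((j : A) → E)) : planCost ε L π ≤ planCost ε L' π :=
  Finset.sum_le_sum_of_subset fun A hA => by
    simp only [Finset.mem_filter] at hA ⊢
    exact ⟨hA.1, hA.2.trans h⟩

theorem planMarginal_eq_sum (L : ℕ) (π : (A : Finset (Fin K)) → Measure ((j : A) → E))
    (i : Fin K) :
    planMarginal L π i = ∑ A ∈ (SK K).filter (fun A => A.card ≤ L), projMarg A (π A) i := by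
  rw [planMarginal, ← Finset.filter_filter]
  exact Finset.sum_filter_of_ne fun A _ h => by_contra fun hi => h (projMarg_of_notMem hi _)

/-- Only the values at `|B| ≤ L` matter for the level-`L` problem. -/
def truncatedPlan (L : ℕ) (π : (A : Finset (Fin K)) → Measure ((j : A) → E))
    (B : Finset (Fin K)) : Measure ((j : B) → E) :=
  π B + if B.card = L then
    ∑ A ∈ (SK K).filter (fun A => L < A.card), faceWeight L A • restrictMeasure A B (π A)
  else 0

theorem planMarginal_truncatedPlan {L : ℕ} (hL : 1 ≤ L)
    (π : (A : Finset (Fin K)) → Measure ((j : A) → E)) (i : Fin K) :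
    planMarginal L (truncatedPlan L π) i = planMarginal K π i := by
  have hspread : ∀ A ∈ (SK K).filter (fun A => L < A.card),
      ∑ B ∈ Finset.univ.powersetCard L,
        faceWeight L A • projMarg B (restrictMeasure A B (π A)) i = projMarg A (π A) i := by
    intro A hA
    rw [← Finset.smul_sum, sum_projMarg_restrictMeasure hL, ← Nat.cast_smul_eq_nsmul ℝ≥0∞,
      smul_smul, faceWeight_mul_choose_pred hL (Finset.mem_filter.mp hA).2.le, one_smul]
  calc planMarginal L (truncatedPlan L π) i
      = ∑ B ∈ (SK K).filter (fun B => B.card ≤ L), projMarg B (π B) i +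
          ∑ B ∈ (SK K).filter (fun B => B.card ≤ L), if B.card = L then
            ∑ A ∈ (SK K).filter (fun A => L < A.card),
              faceWeight L A • projMarg B (restrictMeasure A B (π A)) i
          else 0 := by
        rw [planMarginal_eq_sum, ← Finset.sum_add_distrib]
        refine Finset.sum_congr rfl fun B _ => ?_
        simp only [← projMargₗ_apply, truncatedPlan, map_add]
        split_ifs <;> simp only [map_sum, map_smul, map_zero]
    _ = ∑ B ∈ (SK K).filter (fun B => B.card ≤ L), projMarg B (π B) i +
          ∑ A ∈ (SK K).filter (fun A => ¬A.card ≤ L), projMarg A (π A) i := by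
        simp only [sum_filter_card_le_ite_card_eq hL, not_le]
        rw [Finset.sum_comm, Finset.sum_congr rfl hspread]
    _ = planMarginal K π i := by
        rw [Finset.sum_filter_add_sum_filter_not, planMarginal_eq_sum,
          Finset.filter_true_of_mem fun A _ =>
            (Finset.card_le_univ A).trans_eq (Fintype.card_fin K)]

theorem planCost_truncatedPlan_le [NormedAddCommGroup E] (ε : ℝ) {L : ℕ} (hL : 1 ≤ L)
    (π : (A : Finset (Fin K)) → Measure ((j : A) → E)) :
    planCost ε L (truncatedPlan L π) ≤ planCost ε L π +
      ∑ A ∈ (SK K).filter (fun A => L < A.card),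
        (A.card / L : ℝ≥0∞) * ∫⁻ x, (1 + cepsA ε A x) ∂(π A) := by
  calc planCost ε L (truncatedPlan L π)
      = planCost ε L π + ∑ B ∈ (SK K).filter (fun B => B.card ≤ L), if B.card = L then
            ∑ A ∈ (SK K).filter (fun A => L < A.card),
              faceWeight L A * ∫⁻ x, (1 + cepsA ε B x) ∂(restrictMeasure A B (π A))
          else 0 := by
        rw [planCost, planCost, ← Finset.sum_add_distrib]
        refine Finset.sum_congr rfl fun B _ => ?_
        rw [truncatedPlan, lintegral_add_measure]
        split_ifs <;> simp only [lintegral_finsetSum_measure, lintegral_smul_measure,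
          lintegral_zero_measure, smul_eq_mul]
    _ = planCost ε L π + ∑ A ∈ (SK K).filter (fun A => L < A.card), faceWeight L A *
          ∑ B ∈ Finset.univ.powersetCard L,
            ∫⁻ x, (1 + cepsA ε B x) ∂(restrictMeasure A B (π A)) := by
        simp only [sum_filter_card_le_ite_card_eq hL, Finset.mul_sum]
        rw [Finset.sum_comm]
    _ ≤ planCost ε L π + ∑ A ∈ (SK K).filter (fun A => L < A.card), faceWeight L A *
          (A.card.choose L * ∫⁻ x, (1 + cepsA ε A x) ∂(π A)) := by
        gcongr with A
        exact sum_lintegral_restrictMeasure_le ε L A (π A)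
    _ = _ := by
        congr 1
        refine Finset.sum_congr rfl fun A hA => ?_
        rw [← mul_assoc, faceWeight_mul_choose hL (Finset.mem_filter.mp hA).2.le]

end Plans

end StratifiedPlans

theorem stmt1_general {E : Type*} [NormedAddCommGroup E]
    [MeasurableSpace E]
    (ε : ℝ) (K L : ℕ) (hL : 1 ≤ L) (hLK : L ≤ K)
    (μ : Fin K → Measure E)
    (πS : (A : Finset (Fin K)) → Measure ((j : A) → E))
    (hfeas : ∀ i : Fin K,
      ∑ A ∈ (SK K).filter (fun A => A.card ≤ K ∧ i ∈ A), projMarg A (πS A) i = μ i)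
    (hopt : ∑ A ∈ (SK K).filter (fun A => A.card ≤ K),
        ∫⁻ x, (1 + cepsA ε A x) ∂(πS A) = Mval ε K K μ) :
    Mval ε K L μ - Mval ε K K μ ≤
      ∑ k ∈ Finset.Icc (L + 1) K,
        ((k : ℝ≥0∞) / (L : ℝ≥0∞)) *
          ∑ A ∈ (SK K).filter (fun A => A.card = k), πS A Set.univ := by
  rw [tsub_le_iff_right]
  by_cases hK : Mval ε K K μ = ⊤
  · simp [hK]
  have hmass : ∀ A ∈ (SK K).filter (fun A => L < A.card),
      ∫⁻ x, (1 + cepsA ε A x) ∂(πS A) = πS A Set.univ := by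
    intro A hA
    refine lintegral_one_add_cepsA ε (ne_top_of_le_ne_top (hopt ▸ hK) ?_)
    refine Finset.single_le_sum (f := fun A => ∫⁻ x, (1 + cepsA ε A x) ∂(πS A))
      (fun _ _ => zero_le) (Finset.mem_filter.mpr ⟨(Finset.mem_filter.mp hA).1, ?_⟩)
    exact (Finset.card_le_univ A).trans_eq (Fintype.card_fin K)
  calc Mval ε K L μ
      ≤ planCost ε L (truncatedPlan L πS) :=
        Mval_le_planCost fun i => (planMarginal_truncatedPlan hL πS i).trans (hfeas i)
    _ ≤ planCost ε L πS + ∑ A ∈ (SK K).filter (fun A => L < A.card),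
          (A.card / L : ℝ≥0∞) * ∫⁻ x, (1 + cepsA ε A x) ∂(πS A) :=
        planCost_truncatedPlan_le ε hL πS
    _ ≤ Mval ε K K μ + ∑ A ∈ (SK K).filter (fun A => L < A.card),
          (A.card / L : ℝ≥0∞) * πS A Set.univ := by
        rw [Finset.sum_congr rfl fun A hA => by rw [hmass A hA]]
        exact add_le_add_left (hopt ▸ planCost_mono ε hLK πS) _
    _ = _ := by rw [sum_card_div_mul_eq_sum_Icc, add_comm]

/-- if `(π*_A)` attains the untruncated stratified MOT value `M(K)`,
then for `1 ≤ L ≤ K`,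
`M(L) − M(K) ≤ Σ_{k=L+1}^K (k/L) Σ_{|A|=k} π*_A((ℝ^p)^A)`. -/
theorem stmt1 {E : Type*} [NormedAddCommGroup E] [NormedSpace ℝ E]
    [FiniteDimensional ℝ E] [MeasurableSpace E] [BorelSpace E]
    (ε : ℝ) (hε : 0 < ε) (K L : ℕ) (hL : 1 ≤ L) (hLK : L ≤ K)
    (μ : Fin K → Measure E) (hμ : ∀ i, IsFiniteMeasure (μ i))
    (πS : (A : Finset (Fin K)) → Measure ((j : A) → E))
    (hfeas : ∀ i : Fin K,
      ∑ A ∈ (SK K).filter (fun A => A.card ≤ K ∧ i ∈ A), projMarg A (πS A) i = μ i)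
    (hopt : ∑ A ∈ (SK K).filter (fun A => A.card ≤ K),
        ∫⁻ x, (1 + cepsA ε A x) ∂(πS A) = Mval ε K K μ) :
    Mval ε K L μ - Mval ε K K μ ≤
      ∑ k ∈ Finset.Icc (L + 1) K,
        ((k : ℝ≥0∞) / (L : ℝ≥0∞)) *
          ∑ A ∈ (SK K).filter (fun A => A.card = k), πS A Set.univ :=
  stmt1_general ε K L hL hLK μ πS hfeas hopt

end
end

section
/- For every 1 ≤ L ≤ K, the optimal value of the truncated stratified multimarginal optimal transport problem M(L) equals the optimal value of the truncated linear program: min over w : 𝓘_L → [0,1] satisfying, for every i ∈ {1,…,K} and every x ∈ 𝒳_i, Σ_{ι∈𝓘_L : (x,i)∈ι} w(ι) = μ_i(x), of the objective Σ_{ι∈𝓘_L} w(ι). In particular, taking L = K gives the equivalence of the untruncated problems. -/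
open scoped ENNReal BigOperators

noncomputable section

namespace Stmt2

variable {E : Type*} [NormedAddCommGroup E] [DecidableEq E] {K : ℕ}

/-- The cost `c_ε(x, x') = 0` if `‖x − x'‖ ≤ ε` and `+∞` otherwise. -/
def ceps (ε : ℝ) (x y : E) : ℝ≥0∞ := if ‖x - y‖ ≤ ε then 0 else ⊤

/-- The cost tensor `c_{ε,A}(x_A) = inf_{x'∈E} Σ_{i∈A} c_ε(x', x_i)` for a tuple of
points of the finite sets `𝒳 i`, `i ∈ A`. -/
def cepsA (ε : ℝ) (𝒳 : Fin K → Finset E) (A : Finset (Fin K))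
    (x : (j : A) → ↥(𝒳 j.1)) : ℝ≥0∞ :=
  ⨅ x' : E, ∑ j : A, ceps ε x' (x j : E)

/-- The `i`-th marginal of a nonnegative function on `∏_{j∈A} 𝒳 j`. -/
def marg (𝒳 : Fin K → Finset E) (A : Finset (Fin K))
    (π : ((j : A) → ↥(𝒳 j.1)) → ℝ) (i : Fin K) (xi : ↥(𝒳 i)) : ℝ :=
  if hi : i ∈ A then
    ∑ x : (j : A) → ↥(𝒳 j.1), (if x ⟨i, hi⟩ = xi then π x else 0)
  else 0

/-- The value `M(L)` of the level-`L` truncated stratified MOT problem over the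
finite sets `𝒳 i` with weights `μ`. -/
def Mval (ε : ℝ) (𝒳 : Fin K → Finset E) (μ : (i : Fin K) → E → ℝ) (L : ℕ) : ℝ≥0∞ :=
  sInf {v : ℝ≥0∞ |
    ∃ π : (A : Finset (Fin K)) → ((j : A) → ↥(𝒳 j.1)) → ℝ,
      (∀ A x, 0 ≤ π A x) ∧
      (∀ (i : Fin K) (xi : ↥(𝒳 i)),
        ∑ A ∈ Finset.univ.filter
            (fun A : Finset (Fin K) => A.Nonempty ∧ A.card ≤ L ∧ i ∈ A),
          marg 𝒳 A (π A) i xi = μ i xi) ∧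
      v = ∑ A ∈ Finset.univ.filter
            (fun A : Finset (Fin K) => A.Nonempty ∧ A.card ≤ L),
          ∑ x : (j : A) → ↥(𝒳 j.1),
            (1 + cepsA ε 𝒳 A x) * ENNReal.ofReal (π A x)}

/-- `ι` is a valid interaction of size at most `L`: a partial assignment (with
pairwise distinct labels by construction) of points `x_j ∈ 𝒳 j`, nonempty, of size at
most `L`, such that some point `x'` is within distance `ε` of every assigned point. -/
def ValidI (ε : ℝ) (𝒳 : Fin K → Finset E) (L : ℕ)
    (ι : (i : Fin K) → Option ↥(𝒳 i)) : Prop :=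
  (∃ i, (ι i).isSome) ∧
  (Finset.univ.filter fun i => (ι i).isSome).card ≤ L ∧
  (∃ x' : E, ∀ (i : Fin K) (xi : ↥(𝒳 i)), ι i = some xi → ‖x' - (xi : E)‖ ≤ ε)

/-- The value of the level-`L` truncated linear program: minimize `Σ_ι w(ι)` over
`w : 𝓘_L → [0,1]` with `Σ_{ι ∋ (x,i)} w(ι) = μ_i(x)` for all `i` and `x ∈ 𝒳 i`. -/
def LPval (ε : ℝ) (𝒳 : Fin K → Finset E) (μ : (i : Fin K) → E → ℝ) (L : ℕ) : ℝ≥0∞ :=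
  sInf {v : ℝ≥0∞ |
    ∃ w : ((i : Fin K) → Option ↥(𝒳 i)) → ℝ,
      (∀ ι, 0 ≤ w ι ∧ w ι ≤ 1) ∧
      (∀ ι, ¬ ValidI ε 𝒳 L ι → w ι = 0) ∧
      (∀ (i : Fin K) (xi : ↥(𝒳 i)),
        ∑ ι ∈ Finset.univ.filter
            (fun ι : (i : Fin K) → Option ↥(𝒳 i) => ι i = some xi),
          w ι = μ i xi) ∧
      v = ENNReal.ofReal (∑ ι, w ι)}

end Stmt2

/-!
Write a partial assignment `ι : ∀ i, Option (𝒳 i)` as a pair `(A, x_A)`, `A` its domain. Then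
`ι` is a valid interaction of size at most `L` exactly when `A` is a nonempty set of at most `L`
labels and `c_{ε,A}(x_A) = 0`. Since the cost is `0` or `∞`, a plan of finite cost lives on
zero-cost tuples, where its objective is its total mass; so plans `π` of finite cost and
feasible weights `w` are the same data with the same marginals and the same value. The bound
`w ≤ 1` comes for free: `w ι ≤ μ_i(x) ≤ 1` for any `(x, i) ∈ ι`.
-/

namespace Stmt2

section PiOption

variable {n : Type*} {β : n → Type*}

theorem sigma_finset_pi_ext {A B : Finset n} (h : A = B) {x : (j : A) → β j}
    {y : (j : B) → β j} (hxy : ∀ i (hA : i ∈ A) (hB : i ∈ B), x ⟨i, hA⟩ = y ⟨i, hB⟩) :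
    (⟨A, x⟩ : Σ A : Finset n, (j : A) → β j) = ⟨B, y⟩ := by
  subst h
  congr
  funext j
  exact hxy j j.2 j.2

variable [DecidableEq n] [Fintype n]

def piOptionEquivSigma : ((i : n) → Option (β i)) ≃ Σ A : Finset n, (j : A) → β j where
  toFun f := ⟨Finset.univ.filter fun i => (f i).isSome,
    fun j => (f j).get (Finset.mem_filter.mp j.2).2⟩
  invFun p i := if h : i ∈ p.1 then some (p.2 ⟨i, h⟩) else none
  left_inv f := by
    funext i
    by_cases h : (f i).isSome
    · simp [h]
    · simp [Option.not_isSome_iff_eq_none.mp h]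
  right_inv := by
    rintro ⟨A, x⟩
    exact sigma_finset_pi_ext (by ext; simp) fun i _ hA => by simp [hA]

theorem piOptionEquivSigma_apply_fst (f : (i : n) → Option (β i)) :
    (piOptionEquivSigma f).1 = Finset.univ.filter fun i => (f i).isSome := rfl

theorem piOptionEquivSigma_symm_apply_eq_some {A : Finset n} {x : (j : A) → β j} {i : n}
    {b : β i} : piOptionEquivSigma.symm ⟨A, x⟩ i = some b ↔ ∃ h : i ∈ A, x ⟨i, h⟩ = b := by
  simp [piOptionEquivSigma]

theorem isSome_piOptionEquivSigma_symm_apply {A : Finset n} {x : (j : A) → β j} {i : n} :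
    (piOptionEquivSigma.symm ⟨A, x⟩ i).isSome ↔ i ∈ A := by
  simp [piOptionEquivSigma]

theorem sum_piOption_eq_sum_finset [∀ i, Fintype (β i)] {M : Type*} [AddCommMonoid M]
    (F : ((i : n) → Option (β i)) → M) (S : Finset (Finset n))
    (hF : ∀ f, (piOptionEquivSigma f).1 ∉ S → F f = 0) :
    ∑ f, F f = ∑ A ∈ S, ∑ x : (j : A) → β j, F (piOptionEquivSigma.symm ⟨A, x⟩) := by
  rw [← piOptionEquivSigma.symm.sum_comp, Fintype.sum_sigma]
  refine (Finset.sum_subset (Finset.subset_univ S) fun A _ hA => ?_).symm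
  refine Finset.sum_eq_zero fun x _ => hF _ ?_
  rwa [Equiv.apply_symm_apply]

end PiOption

section Transport

variable {E : Type*} {K : ℕ} {𝒳 : Fin K → Finset E}

abbrev strata (K L : ℕ) : Finset (Finset (Fin K)) :=
  Finset.univ.filter fun A => A.Nonempty ∧ A.card ≤ L

open Classical in
theorem cepsA_eq_ite [NormedAddCommGroup E] {ε : ℝ} {A : Finset (Fin K)}
    {x : (j : A) → ↥(𝒳 j.1)} :
    cepsA ε 𝒳 A x = if ∃ x' : E, ∀ j : A, ‖x' - (x j : E)‖ ≤ ε then (0 : ℝ≥0∞) else ⊤ := by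
  split_ifs with h
  · obtain ⟨x', hx'⟩ := h
    exact nonpos_iff_eq_zero.mp
      ((iInf_le _ x').trans (Finset.sum_eq_zero fun j _ => if_pos (hx' j)).le)
  · push Not at h
    refine iInf_eq_top.mpr fun x' => ?_
    obtain ⟨j, hj⟩ := h x'
    exact ENNReal.sum_eq_top.mpr ⟨j, Finset.mem_univ j, if_neg hj.not_ge⟩

theorem cepsA_eq_zero_of_ne_top [NormedAddCommGroup E] {ε : ℝ} {A : Finset (Fin K)}
    {x : (j : A) → ↥(𝒳 j.1)} (h : cepsA ε 𝒳 A x ≠ ⊤) : cepsA ε 𝒳 A x = 0 := by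
  rw [cepsA_eq_ite] at h ⊢
  split_ifs at h ⊢ <;> trivial

theorem validI_piOptionEquivSigma_symm_iff [NormedAddCommGroup E] {ε : ℝ} {L : ℕ}
    (p : Σ A : Finset (Fin K), (j : A) → ↥(𝒳 j.1)) :
    ValidI ε 𝒳 L (piOptionEquivSigma.symm p) ↔ p.1 ∈ strata K L ∧ cepsA ε 𝒳 p.1 p.2 = 0 := by
  obtain ⟨A, x⟩ := p
  simp [ValidI, strata, cepsA_eq_ite, isSome_piOptionEquivSigma_symm_apply,
    piOptionEquivSigma_symm_apply_eq_some, ← Finset.nonempty_def, and_assoc]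

theorem mem_strata_of_validI [NormedAddCommGroup E] {ε : ℝ} {L : ℕ}
    {ι : (i : Fin K) → Option ↥(𝒳 i)} (h : ValidI ε 𝒳 L ι) :
    (piOptionEquivSigma ι).1 ∈ strata K L := by
  rw [← piOptionEquivSigma.symm_apply_apply ι, validI_piOptionEquivSigma_symm_iff] at h
  exact h.1

theorem sum_filter_eq_some_eq_sum_marg [DecidableEq E] {L : ℕ}
    (g : ((i : Fin K) → Option ↥(𝒳 i)) → ℝ)
    (hg : ∀ ι, (piOptionEquivSigma ι).1 ∉ strata K L → g ι = 0) (i : Fin K) (xi : ↥(𝒳 i)) :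
    ∑ ι ∈ Finset.univ.filter (fun ι : (i : Fin K) → Option ↥(𝒳 i) => ι i = some xi), g ι =
      ∑ A ∈ Finset.univ.filter (fun A : Finset (Fin K) => A.Nonempty ∧ A.card ≤ L ∧ i ∈ A),
        marg 𝒳 A (fun x => g (piOptionEquivSigma.symm ⟨A, x⟩)) i xi := by
  rw [Finset.sum_filter, sum_piOption_eq_sum_finset]
  · refine Finset.sum_congr rfl fun A hA => ?_
    have hi : i ∈ A := (Finset.mem_filter.mp hA).2.2.2
    simp [marg, hi, piOptionEquivSigma_symm_apply_eq_some]
  · intro ι hι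
    split_ifs with h
    · refine hg ι fun hs => hι ?_
      simp_all [strata, piOptionEquivSigma_apply_fst]
    · rfl

theorem sum_one_add_cepsA_mul_ofReal [NormedAddCommGroup E] {ε : ℝ}
    (S : Finset (Finset (Fin K)))
    {π : (A : Finset (Fin K)) → ((j : A) → ↥(𝒳 j.1)) → ℝ} (hπ : ∀ A x, 0 ≤ π A x)
    (h : ∀ A ∈ S, ∀ x, π A x ≠ 0 → cepsA ε 𝒳 A x = 0) :
    ∑ A ∈ S, ∑ x : (j : A) → ↥(𝒳 j.1), (1 + cepsA ε 𝒳 A x) * ENNReal.ofReal (π A x) =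
      ENNReal.ofReal (∑ A ∈ S, ∑ x, π A x) := by
  rw [ENNReal.ofReal_sum_of_nonneg fun A _ => Finset.sum_nonneg fun x _ => hπ A x]
  refine Finset.sum_congr rfl fun A hA => ?_
  rw [ENNReal.ofReal_sum_of_nonneg fun x _ => hπ A x]
  refine Finset.sum_congr rfl fun x _ => ?_
  by_cases hx : π A x = 0
  · simp [hx]
  · rw [h A hA x hx, add_zero, one_mul]

theorem cepsA_eq_zero_of_sum_ne_top [NormedAddCommGroup E] {ε : ℝ}
    (S : Finset (Finset (Fin K)))
    {π : (A : Finset (Fin K)) → ((j : A) → ↥(𝒳 j.1)) → ℝ} (hπ : ∀ A x, 0 ≤ π A x)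
    (h : ∑ A ∈ S, ∑ x : (j : A) → ↥(𝒳 j.1),
      (1 + cepsA ε 𝒳 A x) * ENNReal.ofReal (π A x) ≠ ⊤) :
    ∀ A ∈ S, ∀ x, π A x ≠ 0 → cepsA ε 𝒳 A x = 0 := by
  intro A hA x hx
  refine cepsA_eq_zero_of_ne_top fun htop => h ?_
  refine ENNReal.sum_eq_top.mpr ⟨A, hA, ENNReal.sum_eq_top.mpr ⟨x, Finset.mem_univ x, ?_⟩⟩
  rw [htop, add_top, ENNReal.top_mul]
  simpa using lt_of_le_of_ne (hπ A x) (Ne.symm hx)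

theorem le_one_of_sum_eq_one {μ : (i : Fin K) → E → ℝ} (hμpos : ∀ i, ∀ x ∈ 𝒳 i, 0 < μ i x)
    (hmass : ∑ i : Fin K, ∑ x ∈ 𝒳 i, μ i x = 1) (i : Fin K) {y : E} (hy : y ∈ 𝒳 i) :
    μ i y ≤ 1 :=
  calc μ i y ≤ ∑ x ∈ 𝒳 i, μ i x := Finset.single_le_sum (fun x hx => (hμpos i x hx).le) hy
    _ ≤ ∑ j : Fin K, ∑ x ∈ 𝒳 j, μ j x :=
        Finset.single_le_sum (fun j _ => Finset.sum_nonneg fun x hx => (hμpos j x hx).le)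
          (Finset.mem_univ i)
    _ = 1 := hmass

theorem le_one_of_marginal_eq [DecidableEq E] {μ : (i : Fin K) → E → ℝ}
    (hμpos : ∀ i, ∀ x ∈ 𝒳 i, 0 < μ i x) (hmass : ∑ i : Fin K, ∑ x ∈ 𝒳 i, μ i x = 1)
    {w : ((i : Fin K) → Option ↥(𝒳 i)) → ℝ} (hw : ∀ ι, 0 ≤ w ι)
    (hmarg : ∀ (i : Fin K) (xi : ↥(𝒳 i)),
      ∑ ι ∈ Finset.univ.filter (fun ι : (i : Fin K) → Option ↥(𝒳 i) => ι i = some xi),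
        w ι = μ i xi)
    {ι : (i : Fin K) → Option ↥(𝒳 i)} (hι : ∃ i, (ι i).isSome) : w ι ≤ 1 := by
  obtain ⟨i, hi⟩ := hι
  obtain ⟨xi, hxi⟩ := Option.isSome_iff_exists.mp hi
  calc w ι ≤ ∑ ι' ∈ Finset.univ.filter
          (fun ι' : (i : Fin K) → Option ↥(𝒳 i) => ι' i = some xi), w ι' :=
        Finset.single_le_sum (fun ι' _ => hw ι') (Finset.mem_filter.mpr ⟨Finset.mem_univ ι, hxi⟩)
    _ = μ i xi := hmarg i xi
    _ ≤ 1 := le_one_of_sum_eq_one hμpos hmass i xi.2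

open Classical in
def weightOf [NormedAddCommGroup E] (ε : ℝ) (𝒳 : Fin K → Finset E) (L : ℕ)
    (π : (A : Finset (Fin K)) → ((j : A) → ↥(𝒳 j.1)) → ℝ)
    (ι : (i : Fin K) → Option ↥(𝒳 i)) : ℝ :=
  if ValidI ε 𝒳 L ι then Sigma.uncurry π (piOptionEquivSigma ι) else 0

theorem weightOf_of_not_validI [NormedAddCommGroup E] {ε : ℝ} {L : ℕ}
    {π : (A : Finset (Fin K)) → ((j : A) → ↥(𝒳 j.1)) → ℝ} {ι : (i : Fin K) → Option ↥(𝒳 i)}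
    (h : ¬ ValidI ε 𝒳 L ι) : weightOf ε 𝒳 L π ι = 0 :=
  if_neg h

theorem weightOf_nonneg [NormedAddCommGroup E] {ε : ℝ} {L : ℕ}
    {π : (A : Finset (Fin K)) → ((j : A) → ↥(𝒳 j.1)) → ℝ} (hπ : ∀ A x, 0 ≤ π A x)
    (ι : (i : Fin K) → Option ↥(𝒳 i)) : 0 ≤ weightOf ε 𝒳 L π ι := by
  unfold weightOf
  split_ifs
  exacts [hπ _ _, le_rfl]

theorem weightOf_piOptionEquivSigma_symm [NormedAddCommGroup E] {ε : ℝ} {L : ℕ}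
    {π : (A : Finset (Fin K)) → ((j : A) → ↥(𝒳 j.1)) → ℝ}
    (hcost : ∀ A ∈ strata K L, ∀ x, π A x ≠ 0 → cepsA ε 𝒳 A x = 0)
    {A : Finset (Fin K)} (hA : A ∈ strata K L) (x : (j : A) → ↥(𝒳 j.1)) :
    weightOf ε 𝒳 L π (piOptionEquivSigma.symm ⟨A, x⟩) = π A x := by
  unfold weightOf
  rw [Equiv.apply_symm_apply, validI_piOptionEquivSigma_symm_iff]
  split_ifs with h
  · rfl
  · by_contra hx
    exact h ⟨hA, hcost A hA x (Ne.symm hx)⟩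

end Transport

section Duality

variable {E : Type*} [NormedAddCommGroup E] [DecidableEq E] {K : ℕ}

theorem Mval_le_LPval (ε : ℝ) (𝒳 : Fin K → Finset E) (μ : (i : Fin K) → E → ℝ) (L : ℕ) :
    Mval ε 𝒳 μ L ≤ LPval ε 𝒳 μ L := by
  refine le_sInf ?_
  rintro v ⟨w, hw01, hw0, hwmarg, rfl⟩
  have hw_strata (ι) (hι : (piOptionEquivSigma ι).1 ∉ strata K L) : w ι = 0 :=
    hw0 ι fun hv => hι (mem_strata_of_validI hv)
  have hcost : ∀ A ∈ strata K L, ∀ x, w (piOptionEquivSigma.symm ⟨A, x⟩) ≠ 0 →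
      cepsA ε 𝒳 A x = 0 := fun A _ x hx =>
    ((validI_piOptionEquivSigma_symm_iff ⟨A, x⟩).mp (not_imp_comm.mp (hw0 _) hx)).2
  refine sInf_le ⟨fun A x => w (piOptionEquivSigma.symm ⟨A, x⟩), fun A x => (hw01 _).1,
    fun i xi => ?_, ?_⟩
  · rw [← hwmarg, sum_filter_eq_some_eq_sum_marg w hw_strata]
  · rw [sum_one_add_cepsA_mul_ofReal _ (fun A x => (hw01 _).1) hcost,
      sum_piOption_eq_sum_finset w _ hw_strata]

theorem LPval_le_Mval (ε : ℝ) (𝒳 : Fin K → Finset E) (μ : (i : Fin K) → E → ℝ)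
    (hμpos : ∀ i, ∀ x ∈ 𝒳 i, 0 < μ i x) (hmass : ∑ i : Fin K, ∑ x ∈ 𝒳 i, μ i x = 1)
    (L : ℕ) : LPval ε 𝒳 μ L ≤ Mval ε 𝒳 μ L := by
  refine le_sInf ?_
  rintro v ⟨π, hπ0, hπmarg, hv⟩
  rcases eq_or_ne v ⊤ with rfl | hv_top
  · exact le_top
  have hcost : ∀ A ∈ strata K L, ∀ x, π A x ≠ 0 → cepsA ε 𝒳 A x = 0 :=
    cepsA_eq_zero_of_sum_ne_top _ hπ0 (hv ▸ hv_top)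
  have hw_strata (ι) (hι : (piOptionEquivSigma ι).1 ∉ strata K L) : weightOf ε 𝒳 L π ι = 0 :=
    weightOf_of_not_validI fun hv => hι (mem_strata_of_validI hv)
  have hw_marg (i) (xi : ↥(𝒳 i)) :
      ∑ ι ∈ Finset.univ.filter (fun ι : (i : Fin K) → Option ↥(𝒳 i) => ι i = some xi),
        weightOf ε 𝒳 L π ι = μ i xi := by
    rw [sum_filter_eq_some_eq_sum_marg _ hw_strata, ← hπmarg]
    refine Finset.sum_congr rfl fun A hA => ?_
    obtain ⟨hne, hcard, -⟩ := (Finset.mem_filter.mp hA).2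
    have hA' : A ∈ strata K L := Finset.mem_filter.mpr ⟨Finset.mem_univ A, hne, hcard⟩
    simp only [weightOf_piOptionEquivSigma_symm hcost hA']
  refine sInf_le ⟨weightOf ε 𝒳 L π, fun ι => ⟨weightOf_nonneg hπ0 ι, ?_⟩,
    fun ι => weightOf_of_not_validI, hw_marg, ?_⟩
  · by_cases hι : ValidI ε 𝒳 L ι
    · exact le_one_of_marginal_eq hμpos hmass (weightOf_nonneg hπ0) hw_marg hι.1
    · exact (weightOf_of_not_validI hι).trans_le zero_le_one
  · rw [hv, sum_one_add_cepsA_mul_ofReal _ hπ0 hcost, sum_piOption_eq_sum_finset _ _ hw_strata]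
    exact congrArg ENNReal.ofReal (Finset.sum_congr rfl fun A hA =>
      Finset.sum_congr rfl fun x _ => (weightOf_piOptionEquivSigma_symm hcost hA x).symm)

theorem stmt2_general (ε : ℝ) (𝒳 : Fin K → Finset E)
    (μ : (i : Fin K) → E → ℝ)
    (hμpos : ∀ i, ∀ x ∈ 𝒳 i, 0 < μ i x)
    (hmass : ∑ i : Fin K, ∑ x ∈ 𝒳 i, μ i x = 1)
    (L : ℕ) :
    Mval ε 𝒳 μ L = LPval ε 𝒳 μ L :=
  (Mval_le_LPval ε 𝒳 μ L).antisymm (LPval_le_Mval ε 𝒳 μ hμpos hmass L)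

/-- for every `1 ≤ L ≤ K`, the truncated stratified MOT value `M(L)`
equals the value of the truncated linear program (for `L = K`, the untruncated
problems are equivalent). -/
theorem stmt2 (ε : ℝ) (hε : 0 < ε) (𝒳 : Fin K → Finset E)
    (h𝒳 : ∀ i, (𝒳 i).Nonempty) (μ : (i : Fin K) → E → ℝ)
    (hμpos : ∀ i, ∀ x ∈ 𝒳 i, 0 < μ i x)
    (hmass : ∑ i : Fin K, ∑ x ∈ 𝒳 i, μ i x = 1)
    (L : ℕ) (hL : 1 ≤ L) (hLK : L ≤ K) :
    Mval ε 𝒳 μ L = LPval ε 𝒳 μ L :=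
  stmt2_general ε 𝒳 μ hμpos hmass L

end Duality

end Stmt2

end
end

section
/- For every family of couplings {π_A}_{A∈S_K^L} and every family of strictly positive vectors μ = (μ₁,…,μ_K), there exists a family of couplings {π̂_A}_{A∈S_K^L} (the output of the rounding scheme) such that: (i) for every i ∈ {1,…,K}, Σ_{A∈S_K^L(i)} Pᵢ#π̂_A = μᵢ exactly; and (ii) Σ_{A∈S_K^L} ‖π̂_A − π_A‖₁ ≤ L · Σ_{i=1}^K ‖Σ_{A∈S_K^L(i)} Pᵢ#π_A − μᵢ‖₁. Moreover π̂_A(x_A) > 0 only if π_A(x_A) > 0 except possibly on singleton sets A = {i}. -/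
open scoped ENNReal BigOperators

noncomputable section

/-- `S_K^L`: the nonempty subsets of `{1,…,K}` of size at most `L`. -/
def SKL (K L : ℕ) : Finset (Finset (Fin K)) :=
  Finset.univ.filter fun A => A.Nonempty ∧ A.card ≤ L

/-- `S_K^L(i)`: the members of `S_K^L` containing `i`. -/
def SKLi (K L : ℕ) (i : Fin K) : Finset (Finset (Fin K)) :=
  (SKL K L).filter fun A => i ∈ A

variable {K : ℕ} (𝒳 : Fin K → Type*) [∀ i, Fintype (𝒳 i)] [∀ i, DecidableEq (𝒳 i)]

/-- The `i`-th marginal `Pᵢ#π_A` of a coupling `π_A` on `𝒳^A`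
(zero when `i ∉ A`). -/
def marg (A : Finset (Fin K)) (π : ((j : A) → 𝒳 j.1) → ℝ) (i : Fin K) (xi : 𝒳 i) : ℝ :=
  if hi : i ∈ A then
    ∑ x : (j : A) → 𝒳 j.1, (if x ⟨i, hi⟩ = xi then π x else 0)
  else 0

/-- `Σ_{A ∈ S_K^L(i)} Pᵢ#π_A`, evaluated at `xi`. -/
def totMarg (L : ℕ) (π : (A : Finset (Fin K)) → ((j : A) → 𝒳 j.1) → ℝ)
    (i : Fin K) (xi : 𝒳 i) : ℝ :=
  ∑ A ∈ SKLi K L i, marg 𝒳 A (π A) i xi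

/-- The couplings `π_A(g)` induced by potentials `g`, interpreted as `0` where the
cost is `+∞`. -/
def piInd (η : ℝ) (c : (A : Finset (Fin K)) → ((j : A) → 𝒳 j.1) → ℝ≥0∞)
    (g : (i : Fin K) → 𝒳 i → ℝ) (A : Finset (Fin K)) (x : (j : A) → 𝒳 j.1) : ℝ :=
  if c A x = ⊤ then 0
  else Real.exp ((∑ j : A, g j.1 (x j) - (1 + (c A x).toReal)) / η)

/-- The dual objective `𝒢^L`. -/
def dualObj (η : ℝ) (L : ℕ) (c : (A : Finset (Fin K)) → ((j : A) → 𝒳 j.1) → ℝ≥0∞)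
    (μ : (i : Fin K) → 𝒳 i → ℝ) (g : (i : Fin K) → 𝒳 i → ℝ) : ℝ :=
  (∑ A ∈ SKL K L, ∑ x : (j : A) → 𝒳 j.1, piInd 𝒳 η c g A x)
    - (1 / η) * ∑ i : Fin K, ∑ xi : 𝒳 i, g i xi * μ i xi

/-- Unnormalized Kullback–Leibler divergence (convention `0 · log 0 = 0`). -/
def KLdiv {Z : Type*} [Fintype Z] (α β : Z → ℝ) : ℝ :=
  (∑ z, (β z - α z)) + ∑ z, α z * Real.log (α z / β z)

/-- ℓ¹ norm of a vector on a finite set. -/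
def l1 {Z : Type*} [Fintype Z] (v : Z → ℝ) : ℝ := ∑ z, |v z|

/-- `g : ℕ → potentials` is generated by the greedy Sinkhorn iteration: `g⁰ = 0`,
and at each step a coordinate `I` maximizing the KL-discrepancy of the `I`-th
marginal is updated by the Sinkhorn formula, all others kept fixed. -/
def IsGreedySinkhorn (η : ℝ) (L : ℕ)
    (c : (A : Finset (Fin K)) → ((j : A) → 𝒳 j.1) → ℝ≥0∞)
    (μ : (i : Fin K) → 𝒳 i → ℝ) (g : ℕ → (i : Fin K) → 𝒳 i → ℝ) : Prop :=
  (∀ i xi, g 0 i xi = 0) ∧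
  ∀ t : ℕ, ∃ I : Fin K,
    (∀ i : Fin K,
      KLdiv (μ i) (totMarg 𝒳 L (piInd 𝒳 η c (g t)) i) ≤
        KLdiv (μ I) (totMarg 𝒳 L (piInd 𝒳 η c (g t)) I)) ∧
    (∀ xI : 𝒳 I, g (t + 1) I xI =
      g t I xI + η * Real.log (μ I xI)
        - η * Real.log (totMarg 𝒳 L (piInd 𝒳 η c (g t)) I xI)) ∧
    (∀ i : Fin K, i ≠ I → g (t + 1) i = g t i)

/-- The marginal error `E_t` of the greedy Sinkhorn iteration. -/
def Err (η : ℝ) (L : ℕ) (c : (A : Finset (Fin K)) → ((j : A) → 𝒳 j.1) → ℝ≥0∞)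
    (μ : (i : Fin K) → 𝒳 i → ℝ) (g : ℕ → (i : Fin K) → 𝒳 i → ℝ) (t : ℕ) : ℝ :=
  ∑ i : Fin K,
    l1 (fun xi : 𝒳 i => μ i xi - totMarg 𝒳 L (piInd 𝒳 η c (g t)) i xi)

/-- `C* := maxᵢ nᵢ / n`. -/
def Cstar (n : ℝ) : ℝ := ((Finset.univ.sup fun i : Fin K => Fintype.card (𝒳 i) : ℕ) : ℝ) / n

/-- `min_{j, y} μ_j(y)`. -/
def muMin (μ : (i : Fin K) → 𝒳 i → ℝ) : ℝ :=
  sInf {v : ℝ | ∃ (j : Fin K) (y : 𝒳 j), v = μ j y}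

/-- `R̄ := L − η log min_{j,y} μ_j(y) + η L log(K C* n)`. -/
def Rbar (η : ℝ) (L : ℕ) (n : ℝ) (μ : (i : Fin K) → 𝒳 i → ℝ) : ℝ :=
  (L : ℝ) - η * Real.log (muMin 𝒳 μ) + η * L * Real.log (K * Cstar 𝒳 n * n)

/-! Round `π` in two moves. First damp: multiply `π_A(x_A)` by `∏_{j∈A} r_j(x_j)`, where
`r_i = min(1, μ_i / m_i)` and `m_i = Σ_{A∋i} Pᵢ#π_A`. Every marginal then drops below `μ_i`,
and since `1 - ∏ r_j ≤ Σ (1 - r_j)` the mass removed is at most `Σ_i ‖(m_i - μ_i)⁺‖₁`.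
Then put the remaining deficit of the `i`-th marginal on the singleton `{i}`. A set `A` carries
`|A| ≤ L` marginals, so removing mass `δ` from it raises the total deficit by at most `L δ`;
adding up, the error is at most `L Σ ‖(m_i - μ_i)⁺‖₁ + Σ ‖(μ_i - m_i)⁺‖₁ ≤ L Σ ‖m_i - μ_i‖₁`. -/

open Finset

lemma one_sub_prod_le_sum_one_sub {ι : Type*} (s : Finset ι) {u : ι → ℝ}
    (h0 : ∀ j ∈ s, 0 ≤ u j) (h1 : ∀ j ∈ s, u j ≤ 1) :
    1 - ∏ j ∈ s, u j ≤ ∑ j ∈ s, (1 - u j) := by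
  induction s using Finset.cons_induction with
  | empty => simp
  | cons a s _ ih =>
    rw [prod_cons, sum_cons]
    have hs0 : ∀ j ∈ s, 0 ≤ u j := fun j hj => h0 j (mem_cons_of_mem hj)
    have hs1 : ∀ j ∈ s, u j ≤ 1 := fun j hj => h1 j (mem_cons_of_mem hj)
    have hprod : ∏ j ∈ s, u j ≤ 1 := prod_le_one hs0 hs1
    have := ih hs0 hs1
    -- `1 - a P = (1 - a) + a (1 - P)` and `a ≤ 1`
    nlinarith [h0 a (mem_cons_self a s), h1 a (mem_cons_self a s)]

lemma prod_le_of_mem {ι : Type*} [DecidableEq ι] {s : Finset ι} {u : ι → ℝ}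
    (h0 : ∀ j ∈ s, 0 ≤ u j) (h1 : ∀ j ∈ s, u j ≤ 1) {i : ι} (hi : i ∈ s) :
    ∏ j ∈ s, u j ≤ u i := by
  rw [← mul_prod_erase s u hi]
  exact mul_le_of_le_one_right (h0 i hi)
    (prod_le_one (fun j hj => h0 j (mem_of_mem_erase hj)) fun j hj => h1 j (mem_of_mem_erase hj))

lemma eq_singleton_of_mem_of_card_eq_one {α : Type*} {A : Finset α} {i : α} (hi : i ∈ A)
    (hA : A.card = 1) : A = {i} :=
  eq_singleton_iff_unique_mem.mpr ⟨hi, fun j hj => card_le_one.mp hA.le j hj i hi⟩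

lemma max_sub_add_le_mul_abs {L m μ : ℝ} (hL : 1 ≤ L) :
    (1 + L) * max (m - μ) 0 + (μ - m) ≤ L * |m - μ| := by
  rcases le_total m μ with h | h
  · rw [max_eq_right (by linarith), abs_of_nonpos (by linarith)]
    nlinarith
  · rw [max_eq_left (by linarith), abs_of_nonneg (by linarith)]
    linarith

section L1

variable {Z : Type*} [Fintype Z]

lemma l1_add_le (v w : Z → ℝ) : l1 (fun z => v z + w z) ≤ l1 v + l1 w := by
  rw [l1, l1, l1, ← sum_add_distrib]
  exact sum_le_sum fun z _ => abs_add_le _ _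

lemma l1_eq_sum_of_nonneg {v : Z → ℝ} (hv : ∀ z, 0 ≤ v z) : l1 v = ∑ z, v z :=
  sum_congr rfl fun z _ => abs_of_nonneg (hv z)

lemma l1_sub_eq_sum_sub_of_le {v w : Z → ℝ} (h : ∀ z, v z ≤ w z) :
    l1 (fun z => v z - w z) = ∑ z, (w z - v z) :=
  sum_congr rfl fun z _ => by rw [abs_of_nonpos (sub_nonpos.mpr (h z)), neg_sub]

end L1

/-- At `m = 0` the junk value `μ / 0 = 0` gives `damping 0 μ = 0`. -/
def damping (m μ : ℝ) : ℝ := min 1 (μ / m)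

section Damping

variable {m μ : ℝ}

lemma damping_nonneg (hm : 0 ≤ m) (hμ : 0 ≤ μ) : 0 ≤ damping m μ :=
  le_min zero_le_one (div_nonneg hμ hm)

lemma damping_le_one : damping m μ ≤ 1 := min_le_left _ _

lemma damping_mul (hm : 0 ≤ m) (hμ : 0 ≤ μ) : damping m μ * m = min m μ := by
  rcases hm.eq_or_lt with rfl | hm
  · simp [damping, hμ]
  · rw [damping, min_mul_of_nonneg _ _ hm.le, one_mul, div_mul_cancel₀ _ hm.ne']

lemma one_sub_damping_mul (hm : 0 ≤ m) (hμ : 0 ≤ μ) :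
    (1 - damping m μ) * m = max (m - μ) 0 := by
  rw [sub_mul, one_mul, damping_mul hm hμ]
  rcases le_total m μ with h | h
  · rw [min_eq_left h, max_eq_right (by linarith), sub_self]
  · rw [min_eq_right h, max_eq_left (by linarith)]

end Damping

section Marginals

variable {A : Finset (Fin K)} {i : Fin K}

lemma marg_nonneg {q : ((j : A) → 𝒳 j.1) → ℝ} (hq : ∀ x, 0 ≤ q x) (xi : 𝒳 i) :
    0 ≤ marg 𝒳 A q i xi := by
  unfold marg
  split
  · exact sum_nonneg fun x _ => by split <;> simp [hq x]
  · exact le_rfl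

lemma marg_add (p q : ((j : A) → 𝒳 j.1) → ℝ) (xi : 𝒳 i) :
    marg 𝒳 A (fun x => p x + q x) i xi = marg 𝒳 A p i xi + marg 𝒳 A q i xi := by
  unfold marg
  split
  · rw [← sum_add_distrib]
    exact sum_congr rfl fun x _ => by split <;> simp
  · simp

lemma marg_zero (xi : 𝒳 i) : marg 𝒳 A (fun _ => 0) i xi = 0 := by
  simp [marg]

lemma marg_le_mul_marg (hi : i ∈ A) {p q : ((j : A) → 𝒳 j.1) → ℝ} {c : 𝒳 i → ℝ}
    (h : ∀ x, q x ≤ c (x ⟨i, hi⟩) * p x) (xi : 𝒳 i) :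
    marg 𝒳 A q i xi ≤ c xi * marg 𝒳 A p i xi := by
  simp only [marg, dif_pos hi, mul_sum]
  refine sum_le_sum fun x _ => ?_
  split_ifs with hx
  · exact hx ▸ h x
  · rw [mul_zero]

lemma sum_mul_marg (hi : i ∈ A) (f : 𝒳 i → ℝ) (q : ((j : A) → 𝒳 j.1) → ℝ) :
    ∑ xi, f xi * marg 𝒳 A q i xi = ∑ x, f (x ⟨i, hi⟩) * q x := by
  simp only [marg, dif_pos hi, mul_sum, mul_ite, mul_zero]
  rw [sum_comm]
  exact sum_congr rfl fun x _ => by simp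

omit [∀ i, DecidableEq (𝒳 i)] in
lemma sum_pi_singleton (F : ((j : ({i} : Finset (Fin K))) → 𝒳 j.1) → ℝ) :
    ∑ x, F x = ∑ y : 𝒳 i, F ((Equiv.piUnique _).symm y) :=
  ((Equiv.piUnique _).symm.sum_comp F).symm

lemma marg_singleton (q : ((j : ({i} : Finset (Fin K))) → 𝒳 j.1) → ℝ) (xi : 𝒳 i) :
    marg 𝒳 {i} q i xi = q ((Equiv.piUnique _).symm xi) := by
  rw [marg, dif_pos (mem_singleton_self i), sum_pi_singleton]
  exact (sum_ite_eq' _ _ _).trans (if_pos (mem_univ _))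

end Marginals

lemma mem_SKL {L : ℕ} {A : Finset (Fin K)} : A ∈ SKL K L ↔ A.Nonempty ∧ A.card ≤ L := by
  simp [SKL]

lemma singleton_mem_SKL {L : ℕ} (hL : 1 ≤ L) (i : Fin K) : {i} ∈ SKL K L := by
  simpa [mem_SKL] using hL

lemma sum_sum_SKLi_comm {L : ℕ} (F : Fin K → Finset (Fin K) → ℝ) :
    ∑ i, ∑ A ∈ SKLi K L i, F i A = ∑ A ∈ SKL K L, ∑ i ∈ A, F i A :=
  sum_comm' fun i A => by simp [SKLi, and_comm]

section TotalMarginals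

variable (L : ℕ)

lemma totMarg_nonneg {q : (A : Finset (Fin K)) → ((j : A) → 𝒳 j.1) → ℝ}
    (hq : ∀ A x, 0 ≤ q A x) (i : Fin K) (xi : 𝒳 i) : 0 ≤ totMarg 𝒳 L q i xi :=
  sum_nonneg fun A _ => marg_nonneg 𝒳 (hq A) xi

lemma sum_mul_totMarg (f : (i : Fin K) → 𝒳 i → ℝ)
    (q : (A : Finset (Fin K)) → ((j : A) → 𝒳 j.1) → ℝ) :
    ∑ i, ∑ xi, f i xi * totMarg 𝒳 L q i xi
      = ∑ A ∈ SKL K L, ∑ x, (∑ j : A, f j (x j)) * q A x := by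
  simp only [totMarg, mul_sum]
  rw [sum_congr rfl fun i _ => sum_comm, sum_sum_SKLi_comm]
  refine sum_congr rfl fun A _ => ?_
  rw [← sum_coe_sort A]
  calc ∑ j : A, ∑ xj, f j xj * marg 𝒳 A (q A) j xj = ∑ j : A, ∑ x, f j (x j) * q A x :=
        sum_congr rfl fun j _ => sum_mul_marg 𝒳 j.2 (f j) (q A)
    _ = _ := by rw [sum_comm]; simp only [sum_mul]

lemma sum_totMarg (q : (A : Finset (Fin K)) → ((j : A) → 𝒳 j.1) → ℝ) :
    ∑ i, ∑ xi, totMarg 𝒳 L q i xi = ∑ A ∈ SKL K L, A.card * ∑ x, q A x := by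
  simpa [mul_sum] using sum_mul_totMarg 𝒳 L (fun _ _ => 1) q

lemma sum_totMarg_sub_le {π ρ : (A : Finset (Fin K)) → ((j : A) → 𝒳 j.1) → ℝ}
    (hρ : ∀ A x, ρ A x ≤ π A x) :
    ∑ i, ∑ xi, (totMarg 𝒳 L π i xi - totMarg 𝒳 L ρ i xi)
      ≤ L * ∑ A ∈ SKL K L, ∑ x, (π A x - ρ A x) := by
  calc ∑ i, ∑ xi, (totMarg 𝒳 L π i xi - totMarg 𝒳 L ρ i xi)
      = ∑ A ∈ SKL K L, A.card * ∑ x, (π A x - ρ A x) := by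
        simp only [sum_sub_distrib, sum_totMarg, mul_sub]
    _ ≤ L * ∑ A ∈ SKL K L, ∑ x, (π A x - ρ A x) := by
        rw [mul_sum]
        exact sum_le_sum fun A hA => mul_le_mul_of_nonneg_right
          (by exact_mod_cast (mem_SKL.mp hA).2) (sum_nonneg fun x _ => sub_nonneg.mpr (hρ A x))

end TotalMarginals

section AddSingletons

variable (L : ℕ)

def addSingletons (ρ : (A : Finset (Fin K)) → ((j : A) → 𝒳 j.1) → ℝ)
    (d : (i : Fin K) → 𝒳 i → ℝ) (A : Finset (Fin K)) (x : (j : A) → 𝒳 j.1) : ℝ :=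
  ρ A x + if A.card = 1 then ∑ j : A, d j (x j) else 0

variable {𝒳}

lemma totMarg_addSingletons (hL : 1 ≤ L) (ρ : (A : Finset (Fin K)) → ((j : A) → 𝒳 j.1) → ℝ)
    (d : (i : Fin K) → 𝒳 i → ℝ) (i : Fin K) (xi : 𝒳 i) :
    totMarg 𝒳 L (addSingletons 𝒳 ρ d) i xi = totMarg 𝒳 L ρ i xi + d i xi := by
  have hsplit : ∀ A, marg 𝒳 A (addSingletons 𝒳 ρ d A) i xi = marg 𝒳 A (ρ A) i xi
      + marg 𝒳 A (fun x => if A.card = 1 then ∑ j : A, d j (x j) else 0) i xi :=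
    fun A => marg_add 𝒳 _ _ xi
  simp only [totMarg, hsplit, sum_add_distrib]
  congr 1
  rw [sum_eq_single {i}]
  · simp only [card_singleton, if_true]
    rw [marg_singleton, Fintype.sum_unique]
    rfl
  · intro A hA hAi
    have hA1 : A.card ≠ 1 := fun h =>
      hAi (eq_singleton_of_mem_of_card_eq_one (mem_filter.mp hA).2 h)
    simp only [hA1, if_false, marg_zero]
  · intro h
    exact absurd (mem_filter.mpr ⟨singleton_mem_SKL hL i, mem_singleton_self i⟩) h

omit [∀ i, DecidableEq (𝒳 i)] in
lemma sum_l1_addSingletons_sub (hL : 1 ≤ L)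
    (ρ : (A : Finset (Fin K)) → ((j : A) → 𝒳 j.1) → ℝ) (d : (i : Fin K) → 𝒳 i → ℝ) :
    ∑ A ∈ SKL K L, l1 (fun x => addSingletons 𝒳 ρ d A x - ρ A x) = ∑ i, l1 (d i) := by
  have hsing : ∀ i, l1 (fun x => addSingletons 𝒳 ρ d {i} x - ρ {i} x) = l1 (d i) := by
    intro i
    simp only [addSingletons, card_singleton, if_true, add_sub_cancel_left, l1]
    rw [sum_pi_singleton]
    exact sum_congr rfl fun y _ => by rw [Fintype.sum_unique]; rfl
  have hsub : univ.image (fun i : Fin K => ({i} : Finset (Fin K))) ⊆ SKL K L := by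
    intro A hA
    obtain ⟨i, -, rfl⟩ := mem_image.mp hA
    exact singleton_mem_SKL hL i
  have hzero : ∀ A ∈ SKL K L, A ∉ univ.image (fun i : Fin K => ({i} : Finset (Fin K))) →
      l1 (fun x => addSingletons 𝒳 ρ d A x - ρ A x) = 0 := by
    intro A _ hA
    have hA1 : A.card ≠ 1 := fun h => by
      obtain ⟨i, rfl⟩ := card_eq_one.mp h
      exact hA (mem_image_of_mem _ (mem_univ i))
    simp [l1, addSingletons, hA1]
  rw [← sum_subset hsub hzero, sum_image fun i _ j _ h => singleton_injective h]
  exact sum_congr rfl fun i _ => hsing i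

end AddSingletons

section DampedCoupling

variable (L : ℕ)

def dampedCoupling (π : (A : Finset (Fin K)) → ((j : A) → 𝒳 j.1) → ℝ)
    (r : (i : Fin K) → 𝒳 i → ℝ) (A : Finset (Fin K)) (x : (j : A) → 𝒳 j.1) : ℝ :=
  π A x * ∏ j : A, r j (x j)

variable {𝒳} {π : (A : Finset (Fin K)) → ((j : A) → 𝒳 j.1) → ℝ} {r : (i : Fin K) → 𝒳 i → ℝ}
  (hπ : ∀ A x, 0 ≤ π A x) (hr0 : ∀ i xi, 0 ≤ r i xi) (hr1 : ∀ i xi, r i xi ≤ 1)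
include hπ hr0

omit [∀ i, Fintype (𝒳 i)] [∀ i, DecidableEq (𝒳 i)] in
lemma dampedCoupling_nonneg (A : Finset (Fin K)) (x : (j : A) → 𝒳 j.1) :
    0 ≤ dampedCoupling 𝒳 π r A x :=
  mul_nonneg (hπ A x) (prod_nonneg fun j _ => hr0 j (x j))

include hr1

omit [∀ i, Fintype (𝒳 i)] [∀ i, DecidableEq (𝒳 i)] in
lemma dampedCoupling_le (A : Finset (Fin K)) (x : (j : A) → 𝒳 j.1) :
    dampedCoupling 𝒳 π r A x ≤ π A x :=
  mul_le_of_le_one_right (hπ A x) (prod_le_one (fun j _ => hr0 j (x j)) fun j _ => hr1 j (x j))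

lemma totMarg_dampedCoupling_le (i : Fin K) (xi : 𝒳 i) :
    totMarg 𝒳 L (dampedCoupling 𝒳 π r) i xi ≤ r i xi * totMarg 𝒳 L π i xi := by
  rw [totMarg, totMarg, mul_sum]
  refine sum_le_sum fun A hA => ?_
  have hi : i ∈ A := (mem_filter.mp hA).2
  refine marg_le_mul_marg 𝒳 hi (fun x => ?_) xi
  rw [dampedCoupling, mul_comm (r i _)]
  exact mul_le_mul_of_nonneg_left (prod_le_of_mem (u := fun j : A => r j (x j))
    (fun j _ => hr0 _ _) (fun j _ => hr1 _ _) (mem_univ ⟨i, hi⟩)) (hπ A x)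

lemma sum_sub_dampedCoupling_le :
    ∑ A ∈ SKL K L, ∑ x, (π A x - dampedCoupling 𝒳 π r A x)
      ≤ ∑ i, ∑ xi, (1 - r i xi) * totMarg 𝒳 L π i xi := by
  rw [sum_mul_totMarg]
  refine sum_le_sum fun A _ => sum_le_sum fun x _ => ?_
  rw [dampedCoupling, ← mul_one_sub, mul_comm]
  exact mul_le_mul_of_nonneg_right (one_sub_prod_le_sum_one_sub univ
    (u := fun j : A => r j (x j)) (fun j _ => hr0 _ _) fun j _ => hr1 _ _) (hπ A x)

end DampedCoupling

section RoundToMarginals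

variable (L : ℕ) (π : (A : Finset (Fin K)) → ((j : A) → 𝒳 j.1) → ℝ)
  (μ : (i : Fin K) → 𝒳 i → ℝ)

def dampToMarginals : (A : Finset (Fin K)) → ((j : A) → 𝒳 j.1) → ℝ :=
  dampedCoupling 𝒳 π fun i xi => damping (totMarg 𝒳 L π i xi) (μ i xi)

def roundToMarginals : (A : Finset (Fin K)) → ((j : A) → 𝒳 j.1) → ℝ :=
  addSingletons 𝒳 (dampToMarginals 𝒳 L π μ)
    fun i xi => μ i xi - totMarg 𝒳 L (dampToMarginals 𝒳 L π μ) i xi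

variable {𝒳 L π μ}

lemma totMarg_roundToMarginals (hL : 1 ≤ L) (i : Fin K) (xi : 𝒳 i) :
    totMarg 𝒳 L (roundToMarginals 𝒳 L π μ) i xi = μ i xi := by
  rw [roundToMarginals, totMarg_addSingletons L hL, add_sub_cancel]

lemma roundToMarginals_eq_zero {A : Finset (Fin K)} (hA : A.card ≠ 1) {x : (j : A) → 𝒳 j.1}
    (hx : π A x = 0) : roundToMarginals 𝒳 L π μ A x = 0 := by
  simp [roundToMarginals, addSingletons, dampToMarginals, dampedCoupling, hA, hx]

variable (hπ : ∀ A x, 0 ≤ π A x) (hμ : ∀ i xi, 0 ≤ μ i xi)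
include hπ hμ

lemma damping_totMarg_nonneg (i : Fin K) (xi : 𝒳 i) :
    0 ≤ damping (totMarg 𝒳 L π i xi) (μ i xi) :=
  damping_nonneg (totMarg_nonneg 𝒳 L hπ i xi) (hμ i xi)

lemma dampToMarginals_nonneg (A : Finset (Fin K)) (x : (j : A) → 𝒳 j.1) :
    0 ≤ dampToMarginals 𝒳 L π μ A x :=
  dampedCoupling_nonneg hπ (damping_totMarg_nonneg hπ hμ) A x

lemma dampToMarginals_le (A : Finset (Fin K)) (x : (j : A) → 𝒳 j.1) :
    dampToMarginals 𝒳 L π μ A x ≤ π A x :=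
  dampedCoupling_le hπ (damping_totMarg_nonneg hπ hμ) (fun _ _ => damping_le_one) A x

lemma totMarg_dampToMarginals_le (i : Fin K) (xi : 𝒳 i) :
    totMarg 𝒳 L (dampToMarginals 𝒳 L π μ) i xi ≤ μ i xi :=
  calc totMarg 𝒳 L (dampToMarginals 𝒳 L π μ) i xi
      ≤ damping (totMarg 𝒳 L π i xi) (μ i xi) * totMarg 𝒳 L π i xi :=
        totMarg_dampedCoupling_le L hπ (damping_totMarg_nonneg hπ hμ)
          (fun _ _ => damping_le_one) i xi
    _ = min (totMarg 𝒳 L π i xi) (μ i xi) := damping_mul (totMarg_nonneg 𝒳 L hπ i xi) (hμ i xi)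
    _ ≤ μ i xi := min_le_right _ _

lemma roundToMarginals_nonneg (A : Finset (Fin K)) (x : (j : A) → 𝒳 j.1) :
    0 ≤ roundToMarginals 𝒳 L π μ A x := by
  refine add_nonneg (dampToMarginals_nonneg hπ hμ A x) ?_
  split_ifs
  · exact sum_nonneg fun j _ => sub_nonneg.mpr (totMarg_dampToMarginals_le hπ hμ j (x j))
  · exact le_rfl

lemma sum_l1_roundToMarginals_sub_le (hL : 1 ≤ L) :
    ∑ A ∈ SKL K L, l1 (fun x => roundToMarginals 𝒳 L π μ A x - π A x)
      ≤ L * ∑ i, l1 (fun xi : 𝒳 i => totMarg 𝒳 L π i xi - μ i xi) := by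
  set ρ := dampToMarginals 𝒳 L π μ
  set m := totMarg 𝒳 L π
  set E := ∑ A ∈ SKL K L, ∑ x, (π A x - ρ A x)
  have hsplit : ∑ A ∈ SKL K L, l1 (fun x => roundToMarginals 𝒳 L π μ A x - π A x)
      ≤ E + ∑ i, ∑ xi, (μ i xi - m i xi) + ∑ i, ∑ xi, (m i xi - totMarg 𝒳 L ρ i xi) := by
    calc _ ≤ ∑ A ∈ SKL K L, (l1 (fun x => ρ A x - π A x)
            + l1 (fun x => roundToMarginals 𝒳 L π μ A x - ρ A x)) :=
          sum_le_sum fun A _ => by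
            simpa only [sub_add_sub_cancel'] using l1_add_le (fun x => ρ A x - π A x)
              (fun x => roundToMarginals 𝒳 L π μ A x - ρ A x)
      _ = E + ∑ i, ∑ xi, (μ i xi - totMarg 𝒳 L ρ i xi) := by
          rw [sum_add_distrib, roundToMarginals, sum_l1_addSingletons_sub L hL]
          congr 1
          · exact sum_congr rfl fun A _ => l1_sub_eq_sum_sub_of_le (dampToMarginals_le hπ hμ A)
          · exact sum_congr rfl fun i _ =>
              l1_eq_sum_of_nonneg fun xi => sub_nonneg.mpr (totMarg_dampToMarginals_le hπ hμ i xi)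
      _ = _ := by
          rw [add_assoc, ← sum_add_distrib]
          simp only [← sum_add_distrib, sub_add_sub_cancel]
  -- each unit of mass removed from `π_A` is missing from `|A| ≤ L` marginals
  have hdeficit : ∑ i, ∑ xi, (m i xi - totMarg 𝒳 L ρ i xi) ≤ L * E :=
    sum_totMarg_sub_le 𝒳 L (dampToMarginals_le hπ hμ)
  have hremoved : E ≤ ∑ i, ∑ xi, max (m i xi - μ i xi) 0 := by
    refine (sum_sub_dampedCoupling_le L hπ (damping_totMarg_nonneg hπ hμ)
      (fun _ _ => damping_le_one)).trans_eq ?_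
    simp only [one_sub_damping_mul (totMarg_nonneg 𝒳 L hπ _ _) (hμ _ _), m]
  have hpointwise : (1 + L) * ∑ i, ∑ xi, max (m i xi - μ i xi) 0 + ∑ i, ∑ xi, (μ i xi - m i xi)
      ≤ L * ∑ i, l1 (fun xi : 𝒳 i => m i xi - μ i xi) := by
    simp only [mul_sum, ← sum_add_distrib, l1]
    exact sum_le_sum fun i _ => sum_le_sum fun xi _ =>
      max_sub_add_le_mul_abs (by exact_mod_cast hL)
  have hremoved' := mul_le_mul_of_nonneg_left hremoved (by positivity : (0 : ℝ) ≤ 1 + L)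
  linarith

end RoundToMarginals

theorem stmt4_general (K L : ℕ) (hL : 1 ≤ L)
    (𝒳 : Fin K → Type*) [∀ i, Fintype (𝒳 i)] [∀ i, DecidableEq (𝒳 i)]
    (π : (A : Finset (Fin K)) → ((j : A) → 𝒳 j.1) → ℝ)
    (hπ : ∀ A x, 0 ≤ π A x)
    (μ : (i : Fin K) → 𝒳 i → ℝ) (hμpos : ∀ i xi, 0 < μ i xi) :
    ∃ πhat : (A : Finset (Fin K)) → ((j : A) → 𝒳 j.1) → ℝ,
      (∀ A x, 0 ≤ πhat A x) ∧
      (∀ (i : Fin K) (xi : 𝒳 i), totMarg 𝒳 L πhat i xi = μ i xi) ∧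
      (∑ A ∈ SKL K L, l1 (fun x => πhat A x - π A x) ≤
        (L : ℝ) * ∑ i : Fin K,
          l1 (fun xi : 𝒳 i => totMarg 𝒳 L π i xi - μ i xi)) ∧
      (∀ A ∈ SKL K L, A.card ≠ 1 → ∀ x, πhat A x ≠ 0 → π A x ≠ 0) := by
  have hμ : ∀ i xi, 0 ≤ μ i xi := fun i xi => (hμpos i xi).le
  exact ⟨roundToMarginals 𝒳 L π μ, roundToMarginals_nonneg hπ hμ, totMarg_roundToMarginals hL,
    sum_l1_roundToMarginals_sub_le hπ hμ hL,
    fun A _ hA x hx h0 => hx (roundToMarginals_eq_zero hA h0)⟩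

/-- for every family of couplings `{π_A}` and strictly positive
marginals `μ`, there is a rounded family `{π̂_A}` of nonnegative couplings whose
marginals match `μ` exactly, with
`Σ_A ‖π̂_A − π_A‖₁ ≤ L Σᵢ ‖Σ_{A∈S_K^L(i)} Pᵢ#π_A − μᵢ‖₁`, and such that `π̂_A` is
supported in the support of `π_A` except possibly on singleton sets `A`. -/
theorem stmt4 (K L : ℕ) (hK : 0 < K) (hL : 1 ≤ L) (hLK : L ≤ K)
    (𝒳 : Fin K → Type*) [∀ i, Fintype (𝒳 i)] [∀ i, DecidableEq (𝒳 i)]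
    [∀ i, Nonempty (𝒳 i)]
    (π : (A : Finset (Fin K)) → ((j : A) → 𝒳 j.1) → ℝ)
    (hπ : ∀ A x, 0 ≤ π A x)
    (μ : (i : Fin K) → 𝒳 i → ℝ) (hμpos : ∀ i xi, 0 < μ i xi) :
    ∃ πhat : (A : Finset (Fin K)) → ((j : A) → 𝒳 j.1) → ℝ,
      (∀ A x, 0 ≤ πhat A x) ∧
      (∀ (i : Fin K) (xi : 𝒳 i), totMarg 𝒳 L πhat i xi = μ i xi) ∧
      (∑ A ∈ SKL K L, l1 (fun x => πhat A x - π A x) ≤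
        (L : ℝ) * ∑ i : Fin K,
          l1 (fun xi : 𝒳 i => totMarg 𝒳 L π i xi - μ i xi)) ∧
      (∀ A ∈ SKL K L, A.card ≠ 1 → ∀ x, πhat A x ≠ 0 → π A x ≠ 0) :=
  stmt4_general K L hL 𝒳 π hπ μ hμpos
end
end

section
/- For every real s > 0 satisfying s − 1 − log s ≤ 1, it holds that s − 1 − log s ≥ (s − 1)²/5. -/
/-!
The gap `f s = s - 1 - log s` is bounded below on three ranges by three upper bounds for `log`.
Near `1` the bound `log s ≤ 2 (√s - 1)` gives `f s ≥ (√s - 1)²`, which dominates `(s - 1)² / 5`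
as long as `(√s + 1)² ≤ 5`. Further out the tangent lines of `log` at `2` and at `e` make `f`
at least a linear function of `s`; with `log 2 < 7/10` the first one beats `(s - 1)² / 5` exactly
on `[3/2, 3]`, and for `s ≥ 3` the hypothesis `f s ≤ 1` together with `log s ≤ s / e` confines
`s` to `s ≤ 2e / (e - 1) < 3.18`, where the second one suffices.
-/

open Real

namespace Real

theorem log_le_log_add_div_sub_one {a s : ℝ} (ha : 0 < a) (hs : 0 < s) :
    log s ≤ log a + s / a - 1 := by
  have := log_le_sub_one_of_pos (div_pos hs ha)
  rw [log_div hs.ne' ha.ne'] at this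
  linarith

theorem log_le_two_mul_sqrt_sub_one {s : ℝ} (hs : 0 < s) : log s ≤ 2 * (√s - 1) := by
  have := log_le_sub_one_of_pos (sqrt_pos.mpr hs)
  rw [log_sqrt hs.le] at this
  linarith

theorem sq_sub_one_div_five_le_sub_one_sub_log_of_le_three_halves {s : ℝ} (hs : 0 < s)
    (h : s ≤ 3 / 2) : (s - 1) ^ 2 / 5 ≤ s - 1 - log s := by
  set v := √s
  have hv : v ^ 2 = s := sq_sqrt hs.le
  have hv_le : v ≤ 5 / 4 := by nlinarith [sqrt_nonneg s]
  have hv_sq : (v + 1) ^ 2 ≤ 5 := by nlinarith [sqrt_nonneg s]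
  have hlog := log_le_two_mul_sqrt_sub_one hs
  calc (s - 1) ^ 2 / 5 = (v - 1) ^ 2 * (v + 1) ^ 2 / 5 := by rw [← hv]; ring
    _ ≤ (v - 1) ^ 2 := by nlinarith [sq_nonneg (v - 1)]
    _ = s - 1 - 2 * (v - 1) := by rw [← hv]; ring
    _ ≤ s - 1 - log s := by linarith

theorem sq_sub_one_div_five_le_sub_one_sub_log_of_mem_Icc {s : ℝ} (h₁ : 3 / 2 ≤ s)
    (h₂ : s ≤ 3) : (s - 1) ^ 2 / 5 ≤ s - 1 - log s := by
  have hlog := log_le_log_add_div_sub_one two_pos (by linarith : 0 < s)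
  have hlog2 : log 2 < 7 / 10 := log_two_lt_d9.trans (by norm_num)
  nlinarith [mul_nonneg (sub_nonneg.mpr h₁) (sub_nonneg.mpr h₂)]

theorem sq_sub_one_div_five_le_sub_one_sub_log_of_three_le {s : ℝ} (h₁ : 3 ≤ s)
    (h : s - 1 - log s ≤ 1) : (s - 1) ^ 2 / 5 ≤ s - 1 - log s := by
  have he : 27 / 10 < exp 1 := lt_trans (by norm_num) exp_one_gt_d9
  have hlog : log s ≤ s / exp 1 := by
    simpa using log_le_log_add_div_sub_one (exp_pos 1) (by linarith : 0 < s)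
  set c := 1 - 1 / exp 1
  have hc : 17 / 27 < c := by
    have : 1 / exp 1 < 10 / 27 := by
      rw [div_lt_div_iff₀ (exp_pos 1) (by norm_num)]; linarith
    linarith
  have hf : c * s - 1 ≤ s - 1 - log s := by
    have : s / exp 1 = (1 - c) * s := by simp only [c]; ring
    linarith
  have hs : c * s ≤ 2 := by linarith
  nlinarith

end Real

/-- For every real `s > 0` satisfying `s - 1 - log s ≤ 1`, it holds that
`s - 1 - log s ≥ (s - 1)² / 5`. -/
theorem stmt8 (s : ℝ) (hs : 0 < s) (h : s - 1 - Real.log s ≤ 1) :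
    s - 1 - Real.log s ≥ (s - 1) ^ 2 / 5 := by
  rcases le_or_gt s (3 / 2) with h₁ | h₁
  · exact sq_sub_one_div_five_le_sub_one_sub_log_of_le_three_halves hs h₁
  rcases le_or_gt s 3 with h₂ | h₂
  · exact sq_sub_one_div_five_le_sub_one_sub_log_of_mem_Icc h₁.le h₂
  · exact sq_sub_one_div_five_le_sub_one_sub_log_of_three_le h₂.le h
end
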